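/- arXiv:1809.01532 — 7 statements merged into one kernel-verified Lean document; each statement's English description precedes it below -/
import Mathlib

section
/- Let b be a nonnegative integer and c a positive integer. If there exists an integer n > 1 such that n² + bn + c is a practical number, then there are infinitely many nonnegative integers n such that n² + bn + c is a practical number. -/
/-- A positive integer `m` is practical if every `n` with `1 ≤ n ≤ m` is a sum of
distinct positive divisors of `m`. -/
def Practical (m : ℕ) : Prop :=
  0 < m ∧ ∀ n : ℕ, 1 ≤ n → n ≤ m → ∃ s : Finset ℕ, s ⊆ m.divisors ∧ ∑ d ∈ s, d = n

lemma practical_rep_le (m : ℕ) (hm : Practical m) {N : ℕ} (h1 : 1 ≤ N) (h2 : N ≤ 2 * m - 1) :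
    ∃ s : Finset ℕ, s ⊆ m.divisors ∧ ∑ d ∈ s, d = N := by
  have hm_pos := hm.1
  rcases le_or_gt N m with h | h
  · exact hm.2 N h1 h
  · obtain ⟨s, hs, hsum⟩ := hm.2 (N - m) (by omega) (by omega)
    have hmnot : m ∉ s := by
      intro hmem
      have : m ≤ ∑ d ∈ s, d := Finset.single_le_sum (fun i _ => Nat.zero_le i) hmem
      omega
    refine ⟨insert m s, ?_, ?_⟩
    · intro x hx
      rcases Finset.mem_insert.mp hx with rfl | hx
      · exact Nat.mem_divisors.mpr ⟨dvd_refl _, hm_pos.ne'⟩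
      · exact hs hx
    · rw [Finset.sum_insert hmnot, hsum]; omega

lemma practical_rep_le' (m : ℕ) (hm : Practical m) {N : ℕ} (h2 : N ≤ 2 * m - 1) :
    ∃ s : Finset ℕ, s ⊆ m.divisors ∧ ∑ d ∈ s, d = N := by
  rcases Nat.eq_zero_or_pos N with rfl | h
  · exact ⟨∅, by simp, by simp⟩
  · exact practical_rep_le m hm h h2

lemma practical_mul (m k : ℕ) (hm : Practical m) (hk1 : 1 ≤ k) (hk2 : k ≤ 2 * m) :
    Practical (m * k) := by
  have hm_pos := hm.1
  refine ⟨Nat.mul_pos hm_pos hk1, ?_⟩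
  intro N hN1 hN2
  have hqr : N / k * k + N % k = N := Nat.div_add_mod' N k
  have hrk : N % k < k := Nat.mod_lt _ hk1
  have hq : N / k ≤ m := by
    have := Nat.div_le_div_right (c := k) hN2
    rwa [Nat.mul_div_cancel _ hk1] at this
  obtain ⟨s, hs1, hs2⟩ := practical_rep_le' m hm (N := N % k) (by omega)
  have ht : ∃ t : Finset ℕ, t ⊆ m.divisors ∧ ∑ d ∈ t, d = N / k := by
    rcases Nat.eq_zero_or_pos (N / k) with h | h
    · exact ⟨∅, by simp, by simp [h]⟩
    · exact hm.2 _ h hq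
  obtain ⟨t, ht1, ht2⟩ := ht
  have hs_lt : ∀ d ∈ s, d < k := by
    intro d hd
    have : d ≤ ∑ x ∈ s, x := Finset.single_le_sum (fun i _ => Nat.zero_le i) hd
    omega
  have ht_pos : ∀ e ∈ t, 1 ≤ e := fun e he => Nat.pos_of_mem_divisors (ht1 he)
  have hdisj : Disjoint s (t.image (· * k)) := by
    rw [Finset.disjoint_right]
    intro x hx hxs
    obtain ⟨e, he, rfl⟩ := Finset.mem_image.mp hx
    have h1 := hs_lt _ hxs
    have h2 := ht_pos _ he
    nlinarith
  refine ⟨s ∪ t.image (· * k), ?_, ?_⟩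
  · intro x hx
    rcases Finset.mem_union.mp hx with hx | hx
    · have := Nat.mem_divisors.mp (hs1 hx)
      exact Nat.mem_divisors.mpr ⟨this.1.mul_right k, by positivity⟩
    · obtain ⟨e, he, rfl⟩ := Finset.mem_image.mp hx
      have := Nat.mem_divisors.mp (ht1 he)
      exact Nat.mem_divisors.mpr ⟨mul_dvd_mul_right this.1 k, by positivity⟩
  · rw [Finset.sum_union hdisj, Finset.sum_image (by
      intro x _ y _ hxy
      exact Nat.eq_of_mul_eq_mul_right hk1 hxy)]
    rw [hs2, ← Finset.sum_mul, ht2]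
    omega

lemma practical_step (b c n : ℕ) (hn : 2 ≤ n) (hc : 0 < c)
    (h : Practical (n ^ 2 + b * n + c)) :
    Practical ((n + (n ^ 2 + b * n + c)) ^ 2 + b * (n + (n ^ 2 + b * n + c)) + c) := by
  have key : (n + (n ^ 2 + b * n + c)) ^ 2 + b * (n + (n ^ 2 + b * n + c)) + c
      = (n ^ 2 + b * n + c) * ((n ^ 2 + b * n + c) + 2 * n + b + 1) := by ring
  rw [key]
  apply practical_mul _ _ h (by omega)
  have h1 : 2 * n ≤ n ^ 2 := by nlinarith
  have h2 : b ≤ b * n := Nat.le_mul_of_pos_right b (by omega)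
  omega

theorem practical_quadratic_infinite (b : ℕ) (c : ℕ) (hc : 0 < c)
    (h : ∃ n : ℕ, 1 < n ∧ Practical (n ^ 2 + b * n + c)) :
    {n : ℕ | Practical (n ^ 2 + b * n + c)}.Infinite := by
  obtain ⟨n₀, hn₀, hp₀⟩ := h
  have key : ∀ N : ℕ, ∃ n : ℕ, N < n ∧ 1 < n ∧ Practical (n ^ 2 + b * n + c) := by
    intro N
    induction N with
    | zero => exact ⟨n₀, by omega, hn₀, hp₀⟩
    | succ N ih =>
      obtain ⟨n, h1, h2, h3⟩ := ih
      refine ⟨n + (n ^ 2 + b * n + c), ?_, ?_, practical_step b c n h2 hc h3⟩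
      · exact lt_of_le_of_lt (by omega) (Nat.lt_add_of_pos_right h3.1)
      · exact lt_of_lt_of_le h2 (Nat.le_add_right _ _)
  apply Set.infinite_of_not_bddAbove
  rintro ⟨B, hB⟩
  obtain ⟨n, h1, _, h3⟩ := key B
  exact absurd (hB h3) (by omega)
end

section
/- For every nonnegative integer k, the number 2^(35·3^k + 1) + 2 is a practical number. -/
lemma practical_rep {m : ℕ} (hm : Practical m) {r : ℕ} (hr : r < 2 * m) :
    ∃ s : Finset ℕ, s ⊆ m.divisors ∧ (∑ d ∈ s, d) = r ∧ ∀ d ∈ s, d ≤ m := by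
  obtain ⟨hm0, hrep⟩ := hm
  rcases Nat.eq_zero_or_pos r with h0 | hr1
  · exact ⟨∅, by simp, by simp [h0], by simp⟩
  rcases le_or_gt r m with hle | hgt
  · obtain ⟨s, hs, hsum⟩ := hrep r hr1 hle
    exact ⟨s, hs, hsum, fun d hd =>
      Nat.le_of_dvd hm0 (Nat.dvd_of_mem_divisors (hs hd))⟩
  · have h1 : 1 ≤ r - m := by omega
    have h2 : r - m ≤ m := by omega
    obtain ⟨s, hs, hsum⟩ := hrep (r - m) h1 h2
    have hel : ∀ d ∈ s, d ≤ r - m := fun d hd => by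
      calc d ≤ ∑ e ∈ s, e := Finset.single_le_sum (fun e _ => Nat.zero_le e) hd
        _ = r - m := hsum
    have hmnot : m ∉ s := by
      intro hmem
      have := hel m hmem
      omega
    refine ⟨insert m s, ?_, ?_, ?_⟩
    · intro d hd
      rcases Finset.mem_insert.mp hd with h | h
      · rw [h]; exact Nat.mem_divisors_self m hm0.ne'
      · exact hs h
    · rw [Finset.sum_insert hmnot, hsum]; omega
    · intro d hd
      rcases Finset.mem_insert.mp hd with h | h
      · omega
      · exact le_trans (hel d h) (by omega)

lemma practical_mul_prime {m p : ℕ} (hm : Practical m) (hp : p.Prime) (hpm : p ≤ 2 * m) :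
    Practical (m * p) := by
  have hm0 := hm.1
  have hrep := hm.2
  have hp0 : 0 < p := hp.pos
  have hmp0 : 0 < m * p := Nat.mul_pos hm0 hp0
  refine ⟨hmp0, fun n hn1 hn => ?_⟩
  set q := n / p with hq
  set r := n % p with hrdef
  have hr : r < p := Nat.mod_lt _ hp0
  have hqm : q ≤ m := by
    have h := Nat.div_le_div_right (c := p) hn
    rwa [Nat.mul_div_cancel _ hp0] at h
  have hnqr : p * q + r = n := Nat.div_add_mod n p
  have hr2m : r < 2 * m := lt_of_lt_of_le hr hpm
  obtain ⟨S, hS, hSsum, hSle⟩ := practical_rep ⟨hm0, hrep⟩ hr2m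
  have hSlt : ∀ d ∈ S, d < p := by
    intro d hd
    rcases le_or_gt p m with hcase | hcase
    · have hd' : d ≤ r :=
        calc d ≤ ∑ e ∈ S, e := Finset.single_le_sum (fun e _ => Nat.zero_le e) hd
          _ = r := hSsum
      omega
    · exact lt_of_le_of_lt (hSle d hd) hcase
  have hSsub : S ⊆ (m * p).divisors := by
    intro d hd
    have h := Nat.mem_divisors.mp (hS hd)
    exact Nat.mem_divisors.mpr ⟨h.1.mul_right p, hmp0.ne'⟩
  rcases Nat.eq_zero_or_pos q with hq0 | hq1
  · refine ⟨S, hSsub, ?_⟩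
    rw [hq0, Nat.mul_zero, Nat.zero_add] at hnqr
    rw [hSsum]; omega
  · obtain ⟨T, hT, hTsum⟩ := hrep q hq1 hqm
    set P := T.image (fun d => p * d) with hPdef
    have hinj : ∀ a ∈ T, ∀ b ∈ T, p * a = p * b → a = b := by
      intro a _ b _ h
      exact Nat.eq_of_mul_eq_mul_left hp0 h
    have hPsum : ∑ d ∈ P, d = p * q := by
      rw [hPdef, Finset.sum_image hinj, ← Finset.mul_sum, hTsum]
    have hPge : ∀ e ∈ P, p ≤ e := by
      intro e he
      rw [hPdef, Finset.mem_image] at he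
      obtain ⟨d, hd, rfl⟩ := he
      have hd1 : 1 ≤ d := Nat.pos_of_mem_divisors (hT hd)
      calc p = p * 1 := by ring
        _ ≤ p * d := Nat.mul_le_mul_left p hd1
    have hdisj : Disjoint S P := by
      rw [Finset.disjoint_left]
      intro a haS haP
      have h1 := hSlt a haS
      have h2 := hPge a haP
      omega
    have hPsub : P ⊆ (m * p).divisors := by
      intro e he
      rw [hPdef, Finset.mem_image] at he
      obtain ⟨d, hd, rfl⟩ := he
      have hdm : d ∣ m := Nat.dvd_of_mem_divisors (hT hd)
      refine Nat.mem_divisors.mpr ⟨?_, hmp0.ne'⟩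
      have h := mul_dvd_mul_left p hdm
      rwa [mul_comm p m] at h
    refine ⟨S ∪ P, Finset.union_subset hSsub hPsub, ?_⟩
    rw [Finset.sum_union hdisj, hSsum, hPsum]
    omega

lemma practical_mul_all {m : ℕ} (hm : Practical m) :
    ∀ n : ℕ, 0 < n → n ≤ 2 * m → Practical (m * n) := by
  intro n
  induction n using Nat.strong_induction_on with
  | _ n ih =>
    intro hn0 hn2m
    by_cases h1 : n = 1
    · subst h1; simpa using hm
    · set p := n.minFac with hpdef
      have hp : p.Prime := Nat.minFac_prime h1
      have hpd : p ∣ n := Nat.minFac_dvd n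
      have hnp : n / p < n := Nat.div_lt_self hn0 hp.one_lt
      have hnp0 : 0 < n / p := Nat.div_pos (Nat.minFac_le hn0) hp.pos
      have hIH : Practical (m * (n / p)) :=
        ih (n / p) hnp hnp0 (le_trans (Nat.div_le_self _ _) hn2m)
      have hple : p ≤ 2 * (m * (n / p)) := by
        have h1' : p ≤ n := Nat.minFac_le hn0
        have h2' : m ≤ m * (n / p) := Nat.le_mul_of_pos_right _ hnp0
        omega
      have h := practical_mul_prime hIH hp hple
      rwa [mul_assoc, Nat.div_mul_cancel hpd] at h

lemma practical_two : Practical 2 := by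
  refine ⟨by norm_num, fun n h1 h2 => ?_⟩
  interval_cases n
  · exact ⟨{1}, by decide, by decide⟩
  · exact ⟨{2}, by decide, by decide⟩

lemma practical_base : Practical (2 ^ 36 + 2) := by
  have h3 := practical_mul_all practical_two 3 (by norm_num) (by norm_num)
  have h11 := practical_mul_all h3 11 (by norm_num) (by norm_num)
  have h43 := practical_mul_all h11 43 (by norm_num) (by norm_num)
  have h281 := practical_mul_all h43 281 (by norm_num) (by norm_num)
  have h86171 := practical_mul_all h281 86171 (by norm_num) (by norm_num)
  have heq : 2 * 3 * 11 * 43 * 281 * 86171 = 2 ^ 36 + 2 := by norm_num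
  rwa [heq] at h86171

def P42 (y : ℤ) : ℤ := y^12 + y^11 - y^9 - y^8 + y^6 - y^4 - y^3 + y + 1

def P210 (y : ℤ) : ℤ :=
  y^48 - y^47 + y^46 + y^43 - y^42 + 2*y^41 - y^40 + y^39 + y^36 - y^35 + y^34
  - y^33 + y^32 - y^31 - y^28 - y^26 - y^24 - y^22 - y^20 - y^17 + y^16 - y^15
  + y^14 - y^13 + y^12 + y^9 - y^8 + 2*y^7 - y^6 + y^5 + y^2 - y + 1

lemma key_identity (y : ℤ) :
    (y^10 - y^5 + 1) * P42 y * P210 y = y^70 - y^35 + 1 := by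
  unfold P42 P210; ring

lemma pow_two_mul_le {y : ℤ} (hy : 2 ≤ y) (i : ℕ) : 2 * y^i ≤ y^(i+1) := by
  have h0 : (0:ℤ) ≤ y^i := by positivity
  calc 2 * y^i ≤ y * y^i := by nlinarith
    _ = y^(i+1) := by ring

lemma pow_mono_int {y : ℤ} (hy : 2 ≤ y) {i j : ℕ} (h : i ≤ j) : y^i ≤ y^j :=
  pow_le_pow_right₀ (by linarith) h

lemma P42_lb {y : ℤ} (hy : 2 ≤ y) : y^11 ≤ P42 y := by
  have h89 : y^8 ≤ y^9 := pow_mono_int hy (by norm_num)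
  have h49 : y^4 ≤ y^9 := pow_mono_int hy (by norm_num)
  have h39 : y^3 ≤ y^9 := pow_mono_int hy (by norm_num)
  have h910 : 2 * y^9 ≤ y^10 := pow_two_mul_le hy 9
  have h1011 : 2 * y^10 ≤ y^11 := pow_two_mul_le hy 10
  have h1112 : y^11 ≤ y^12 := pow_mono_int hy (by norm_num)
  have h6 : (0:ℤ) ≤ y^6 := by positivity
  have h1 : (0:ℤ) ≤ y := by linarith
  unfold P42
  linarith

lemma P42_ub {y : ℤ} (hy : 2 ≤ y) : P42 y ≤ y^13 := by
  have h16 : y^1 ≤ y^6 := pow_mono_int hy (by norm_num)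
  have h06 : y^0 ≤ y^6 := pow_mono_int hy (by norm_num)
  have h68 : y^6 ≤ y^8 := pow_mono_int hy (by norm_num)
  have h67 : 2 * y^6 ≤ y^7 := pow_two_mul_le hy 6
  have h78 : 2 * y^7 ≤ y^8 := pow_two_mul_le hy 7
  have h1112 : y^11 ≤ y^12 := pow_mono_int hy (by norm_num)
  have h1213 : 2 * y^12 ≤ y^13 := pow_two_mul_le hy 12
  have h9 : (0:ℤ) ≤ y^9 := by positivity
  have h4 : (0:ℤ) ≤ y^4 := by positivity
  have h3 : (0:ℤ) ≤ y^3 := by positivity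
  rw [pow_zero] at h06
  rw [pow_one] at h16
  unfold P42
  linarith

lemma A_lb {y : ℤ} (hy : 2 ≤ y) : y^9 ≤ y^10 - y^5 + 1 := by
  have h59 : y^5 ≤ y^9 := pow_mono_int hy (by norm_num)
  have h910 : 2 * y^9 ≤ y^10 := pow_two_mul_le hy 9
  linarith

lemma P210_pos {y : ℤ} (hy : 2 ≤ y) : 0 < P210 y := by
  have h0 : (0:ℤ) < y := by linarith
  have hA : (0:ℤ) < y^10 - y^5 + 1 := by
    have h1 := A_lb hy
    have h2 := pow_pos h0 9
    linarith
  have hB : 0 < P42 y := lt_of_lt_of_le (pow_pos h0 11) (P42_lb hy)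
  have hR : (0:ℤ) < y^70 - y^35 + 1 := by
    have h3570 : y^35 ≤ y^70 := pow_mono_int hy (by norm_num)
    have := pow_pos h0 35
    linarith
  by_contra h
  push_neg at h
  have hk := key_identity y
  nlinarith [mul_pos hA hB]

lemma P210_ub {y : ℤ} (hy : 2 ≤ y) : P210 y ≤ y^50 := by
  have h0 : (0:ℤ) < y := by linarith
  have hA9 := A_lb hy
  have hB11 := P42_lb hy
  have h20 : y^20 ≤ (y^10 - y^5 + 1) * P42 y := by
    calc y^20 = y^9 * y^11 := by ring
      _ ≤ (y^10 - y^5 + 1) * P42 y :=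
        mul_le_mul hA9 hB11 (by positivity) (by linarith [pow_pos h0 9])
  have hC := P210_pos hy
  have step : P210 y * y^20 ≤ y^50 * y^20 := by
    have h1 : P210 y * y^20 ≤ P210 y * ((y^10 - y^5 + 1) * P42 y) :=
      mul_le_mul_of_nonneg_left h20 hC.le
    have h2 : P210 y * ((y^10 - y^5 + 1) * P42 y) = y^70 - y^35 + 1 := by
      linear_combination key_identity y
    have h3 : y^70 - y^35 + 1 ≤ y^50 * y^20 := by
      have h35 : (0:ℤ) < y^35 := pow_pos h0 35
      have h70 : y^50 * y^20 = y^70 := by ring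
      linarith
    linarith
  exact le_of_mul_le_mul_right step (by positivity)

theorem practical_two_pow (k : ℕ) : Practical (2 ^ (35 * 3 ^ k + 1) + 2) := by
  induction k with
  | zero => simpa using practical_base
  | succ k ih =>
    set x : ℕ := 2 ^ (3 ^ k) with hxdef
    have hx : 2 ≤ x := by
      have h1 : 1 ≤ 3 ^ k := Nat.one_le_pow _ _ (by norm_num)
      calc (2:ℕ) = 2 ^ 1 := (pow_one 2).symm
        _ ≤ 2 ^ (3 ^ k) := Nat.pow_le_pow_right (by norm_num) h1
    have hx1 : 1 ≤ x := by omega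
    have hx0 : 0 < x := by omega
    have hy : (2:ℤ) ≤ (x:ℤ) := by exact_mod_cast hx
    have hNk : 2 ^ (35 * 3 ^ k + 1) + 2 = 2 * (x ^ 35 + 1) := by
      have h : 35 * 3 ^ k = 3 ^ k * 35 := by ring
      rw [h, pow_add, pow_mul, pow_one, ← hxdef]; ring
    have hNk1 : 2 ^ (35 * 3 ^ (k + 1) + 1) + 2 = 2 * (x ^ 105 + 1) := by
      have h : 35 * 3 ^ (k + 1) = 3 ^ k * 105 := by ring
      rw [h, pow_add, pow_mul, pow_one, ← hxdef]; ring
    rw [hNk] at ih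
    rw [hNk1]
    set N : ℕ := 2 * (x ^ 35 + 1) with hNdef
    have hsub : x ^ 5 ≤ x ^ 10 + 1 := by
      have := Nat.pow_le_pow_right hx1 (show 5 ≤ 10 by norm_num)
      omega
    set A : ℕ := x ^ 10 + 1 - x ^ 5 with hAdef
    set B : ℕ := (P42 (x:ℤ)).toNat with hBdef
    set C : ℕ := (P210 (x:ℤ)).toNat with hCdef
    have hAcast : (A:ℤ) = (x:ℤ)^10 - (x:ℤ)^5 + 1 := by
      rw [hAdef]
      push_cast [hsub]
      ring
    have hBcast : (B:ℤ) = P42 (x:ℤ) := by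
      rw [hBdef]
      exact Int.toNat_of_nonneg (le_trans (by positivity) (P42_lb hy))
    have hCcast : (C:ℤ) = P210 (x:ℤ) := by
      rw [hCdef]
      exact Int.toNat_of_nonneg (P210_pos hy).le
    have hNcast : (N:ℤ) = 2 * ((x:ℤ)^35 + 1) := by
      rw [hNdef]; push_cast; ring
    -- nat bounds
    have hA_lb : x ^ 9 ≤ A := by
      have h : ((x:ℤ))^9 ≤ (A:ℤ) := by rw [hAcast]; exact A_lb hy
      exact_mod_cast h
    have hA0 : 0 < A := lt_of_lt_of_le (pow_pos hx0 9) hA_lb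
    have hA_ub : A ≤ x ^ 10 + 1 := by rw [hAdef]; omega
    have hB_lb : x ^ 11 ≤ B := by
      have h : ((x:ℤ))^11 ≤ (B:ℤ) := by rw [hBcast]; exact P42_lb hy
      exact_mod_cast h
    have hB0 : 0 < B := lt_of_lt_of_le (pow_pos hx0 11) hB_lb
    have hB_ub : B ≤ x ^ 13 := by
      have h : (B:ℤ) ≤ ((x:ℤ))^13 := by rw [hBcast]; exact P42_ub hy
      exact_mod_cast h
    have hC0 : 0 < C := by
      have h : (0:ℤ) < (C:ℤ) := by rw [hCcast]; exact P210_pos hy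
      exact_mod_cast h
    have hC_ub : C ≤ x ^ 50 := by
      have h : (C:ℤ) ≤ ((x:ℤ))^50 := by rw [hCcast]; exact P210_ub hy
      exact_mod_cast h
    -- size conditions
    have hNx : x ^ 35 ≤ N := by rw [hNdef]; omega
    have h1035 : x ^ 10 ≤ x ^ 35 := Nat.pow_le_pow_right hx1 (by norm_num)
    have hA2N : A ≤ 2 * N := by omega
    have hB2NA : B ≤ 2 * (N * A) := by
      have h1335 : x ^ 13 ≤ x ^ 35 := Nat.pow_le_pow_right hx1 (by norm_num)
      have hNA : N ≤ N * A := Nat.le_mul_of_pos_right N hA0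
      omega
    have hC2NAB : C ≤ 2 * (N * A * B) := by
      have h5055 : x ^ 50 ≤ x ^ 55 := Nat.pow_le_pow_right hx1 (by norm_num)
      have h55 : x ^ 55 = x ^ 35 * x ^ 9 * x ^ 11 := by ring
      have hprod : x ^ 35 * x ^ 9 * x ^ 11 ≤ N * A * B :=
        Nat.mul_le_mul (Nat.mul_le_mul hNx hA_lb) hB_lb
      omega
    -- build up
    have s1 := practical_mul_all ih A hA0 hA2N
    have s2 := practical_mul_all s1 B hB0 hB2NA
    have s3 := practical_mul_all s2 C hC0 hC2NAB
    have hfinal : N * A * B * C = 2 * (x ^ 105 + 1) := by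
      have hz : ((N * A * B * C : ℕ) : ℤ) = ((2 * (x ^ 105 + 1) : ℕ) : ℤ) := by
        push_cast
        rw [hNcast, hAcast, hBcast, hCcast]
        linear_combination (2 * ((x:ℤ)^35 + 1)) * key_identity (x:ℤ)
      exact_mod_cast hz
    rwa [hfinal] at s3
end

section
/- There are infinitely many practical numbers q such that q⁴ + 2 is also a practical number. More precisely, for every nonnegative integer k, setting q = 2^((35·9^k + 1)/4), both q and q⁴ + 2 are practical numbers. -/
lemma prac_rep {m n : ℕ} (h : Practical m) (hn : n ≤ m) :
    ∃ s : Finset ℕ, s ⊆ m.divisors ∧ ∑ d ∈ s, d = n := by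
  rcases Nat.eq_zero_or_pos n with h0 | h1
  · exact ⟨∅, by simp, by simp [h0]⟩
  · exact h.2 n h1 hn

lemma prac_rep2 {m n : ℕ} (h : Practical m) (hn : n ≤ 2 * m - 1) :
    ∃ s : Finset ℕ, s ⊆ m.divisors ∧ ∑ d ∈ s, d = n := by
  rcases le_or_gt n m with hnm | hnm
  · exact prac_rep h hnm
  · obtain ⟨s, hs, hsum⟩ := prac_rep h (show n - m ≤ m by omega)
    have hms : m ∉ s := by
      intro hm
      have : m ≤ ∑ d ∈ s, d := Finset.single_le_sum (f := id) (fun i _ => Nat.zero_le i) hm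
      omega
    refine ⟨insert m s, ?_, ?_⟩
    · intro x hx
      rcases Finset.mem_insert.mp hx with rfl | hx
      · exact Nat.mem_divisors_self x (by omega)
      · exact hs hx
    · rw [Finset.sum_insert hms, hsum]; omega

lemma prac_mul {m n : ℕ} (hm : Practical m) (hn1 : 1 ≤ n) (hn2 : n ≤ 2 * m) :
    Practical (m * n) := by
  have hm0 := hm.1
  refine ⟨by positivity, fun N hN1 hN2 => ?_⟩
  have hb : N % n < n := Nat.mod_lt _ hn1
  have ha : N / n ≤ m := by
    have h1 := Nat.div_le_div_right (c := n) hN2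
    rwa [Nat.mul_div_cancel _ hn1] at h1
  obtain ⟨sa, hsa, hsasum⟩ := prac_rep hm ha
  obtain ⟨sb, hsb, hsbsum⟩ := prac_rep2 hm (show N % n ≤ 2 * m - 1 by omega)
  have hsb_le : ∀ e ∈ sb, e ≤ N % n := by
    intro e he
    calc e = id e := rfl
    _ ≤ ∑ d ∈ sb, d := Finset.single_le_sum (f := id) (fun i _ => Nat.zero_le i) he
    _ = N % n := hsbsum
  have hdisj : Disjoint (sa.image (fun d => n * d)) sb := by
    rw [Finset.disjoint_left]
    rintro x hx hx'
    obtain ⟨d, hd, rfl⟩ := Finset.mem_image.mp hx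
    have hd1 : 1 ≤ d := Nat.pos_of_mem_divisors (hsa hd)
    have h2 := hsb_le _ hx'
    have h3 : n ≤ n * d := Nat.le_mul_of_pos_right n hd1
    omega
  refine ⟨sa.image (fun d => n * d) ∪ sb, ?_, ?_⟩
  · intro x hx
    rcases Finset.mem_union.mp hx with hx | hx
    · obtain ⟨d, hd, rfl⟩ := Finset.mem_image.mp hx
      have hdd : d ∣ m := (Nat.mem_divisors.mp (hsa hd)).1
      refine Nat.mem_divisors.mpr ⟨?_, by positivity⟩
      rw [mul_comm m n]
      exact mul_dvd_mul_left n hdd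
    · have hdd : x ∣ m := (Nat.mem_divisors.mp (hsb hx)).1
      exact Nat.mem_divisors.mpr ⟨dvd_mul_of_dvd_left hdd n, by positivity⟩
  · rw [Finset.sum_union hdisj,
      Finset.sum_image (fun x _ y _ h => Nat.eq_of_mul_eq_mul_left hn1 h)]
    rw [← Finset.mul_sum, hsasum, hsbsum]
    exact Nat.div_add_mod N n

lemma prac_one : Practical 1 :=
  ⟨one_pos, fun n h1 h2 => ⟨{1}, by simp, by simp; omega⟩⟩

lemma prac_two_pow (i : ℕ) : Practical (2 ^ i) := by
  induction i with
  | zero => simpa using prac_one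
  | succ i ih =>
    have h := prac_mul ih (n := 2) (by norm_num)
      (by have : 1 ≤ 2 ^ i := Nat.one_le_two_pow; omega)
    rwa [← pow_succ] at h
lemma exists_q {pos neg den num : ℕ} (hden : 0 < den)
    (hid : pos * den = num + neg * den) : ∃ q : ℕ, q * den = num := by
  have hle : neg ≤ pos := by
    have h1 : neg * den ≤ pos * den := by
      calc neg * den ≤ num + neg * den := Nat.le_add_left _ _
      _ = pos * den := hid.symm
    exact Nat.le_of_mul_le_mul_right h1 hden
  refine ⟨pos - neg, ?_⟩
  rw [Nat.sub_mul, hid, Nat.add_sub_cancel]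

lemma q_upper {q den num L B : ℕ} (h : q * den = num) (hL : L ≤ den)
    (hnum : num ≤ L * B) (hL0 : 0 < L) : q ≤ B := by
  have h1 : L * q ≤ L * B := by
    calc L * q = q * L := mul_comm _ _
    _ ≤ q * den := Nat.mul_le_mul le_rfl hL
    _ = num := h
    _ ≤ L * B := hnum
  exact Nat.le_of_mul_le_mul_left h1 hL0

lemma q_lower {q den num U b : ℕ} (h : q * den = num) (hU : den ≤ U)
    (hnum : b * U ≤ num) (hU0 : 0 < U) : b ≤ q := by
  have h1 : b * U ≤ q * U := by
    calc b * U ≤ num := hnum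
    _ = q * den := h.symm
    _ ≤ q * U := Nat.mul_le_mul le_rfl hU
  exact Nat.le_of_mul_le_mul_right h1 hU0

lemma u_le {y : ℕ} (hy : 2 ≤ y) {t s : ℕ} (h : t < s) : y ^ t + 1 ≤ y ^ s := by
  have h1 : 1 ≤ y ^ t := Nat.one_le_pow _ _ (by omega)
  calc y ^ t + 1 ≤ y ^ t + y ^ t := by omega
  _ = y ^ t * 2 := by ring
  _ ≤ y ^ t * y := Nat.mul_le_mul le_rfl hy
  _ = y ^ (t + 1) := (pow_succ y t).symm
  _ ≤ y ^ s := Nat.pow_le_pow_right (by omega) h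

set_option maxHeartbeats 1000000 in
lemma step {y : ℕ} (hy : 2 ≤ y) (h0 : Practical (2 * (y ^ 35 + 1))) :
    Practical (2 * (y ^ 315 + 1)) := by
  have hy1 : 1 ≤ y := by omega
  have hpow : ∀ {t s : ℕ}, t ≤ s → y ^ t ≤ y ^ s := fun h => Nat.pow_le_pow_right hy1 h
  have hupos : ∀ t : ℕ, 1 ≤ y ^ t := fun t => Nat.one_le_pow _ _ (by omega)
  obtain ⟨q1, hq1⟩ : ∃ q : ℕ, q * (y + 1) = y ^ 9 + 1 :=
    exists_q (pos := y^8 + y^6 + y^4 + y^2 + 1) (neg := y^7 + y^5 + y^3 + y)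
      (by positivity) (by ring)
  obtain ⟨q2, hq2⟩ : ∃ q : ℕ, q * ((y^5+1) * (y^9+1)) = (y^45+1) * (y+1) :=
    exists_q (pos := y^32 + y^31 + y^21 + y^18 + y^14 + y^11 + y + 1)
      (neg := y^27 + y^26 + y^23 + y^16 + y^9 + y^6 + y^5) (by positivity) (by ring)
  obtain ⟨q3, hq3⟩ : ∃ q : ℕ, q * ((y^7+1) * (y^9+1)) = (y^63+1) * (y+1) :=
    exists_q (pos := y^48 + y^47 + y^34 + y^33 + y^32 + y^31 + y^30 + y^29 + y^19 + y^18 + y^17 + y^16 + y^15 + y^14 + y + 1)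
      (neg := y^41 + y^40 + y^39 + y^38 + y^27 + y^26 + y^25 + y^24 + y^23 + y^22 + y^21 + y^10 + y^9 + y^8 + y^7)
      (by positivity) (by ring)
  obtain ⟨q4, hq4⟩ : ∃ q : ℕ, q * ((y^15+1) * (y^21+1) * (y^35+1) * (y+1)) = (y^105+1) * (y^3+1) * (y^5+1) * (y^7+1) :=
    exists_q (pos := y^48 + y^46 + y^43 + 2*y^41 + y^39 + y^36 + y^34 + y^32 + y^16 + y^14 + y^12 + y^9 + 2*y^7 + y^5 + y^2 + 1)
      (neg := y^47 + y^42 + y^40 + y^35 + y^33 + y^31 + y^28 + y^26 + y^24 + y^22 + y^20 + y^17 + y^15 + y^13 + y^8 + y^6 + y)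
      (by positivity) (by ring)
  obtain ⟨q5, hq5⟩ : ∃ q : ℕ, q * ((y^45+1) * (y^63+1) * (y^105+1) * (y^3+1)) = (y^315+1) * (y^9+1) * (y^15+1) * (y^21+1) :=
    exists_q (pos := y^144 + y^138 + y^129 + 2*y^123 + y^117 + y^108 + y^102 + y^96 + y^48 + y^42 + y^36 + y^27 + 2*y^21 + y^15 + y^6 + 1)
      (neg := y^141 + y^126 + y^120 + y^105 + y^99 + y^93 + y^84 + y^78 + y^72 + y^66 + y^60 + y^51 + y^45 + y^39 + y^24 + y^18 + y^3)
      (by positivity) (by ring)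
  have hyadd : y + 1 ≤ y ^ 2 := by nlinarith
  have L1 : y ≤ y + 1 := by omega
  have U1 : y + 1 ≤ y^2 := by nlinarith
  have NU1 : y^9+1 ≤ y * y^9 := by
    calc y^9+1 ≤ y^10 := u_le hy (by omega)
    _ = y * y^9 := by ring
  have NL1 : y^7 * y^2 ≤ y^9+1 := by
    calc y^7 * y^2 = y^9 := by ring
    _ ≤ y^9+1 := by omega
  have hq1up : q1 ≤ y^9 := q_upper hq1 L1 NU1 (by omega)
  have hq1lo : y^7 ≤ q1 := q_lower hq1 U1 NL1 (by positivity)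
  have L2 : y^14 ≤ (y^5+1) * (y^9+1) := by
    calc y^14 = y^5 * y^9 := by ring
    _ ≤ (y^5+1) * (y^9+1) := by gcongr <;> omega
  have U2 : (y^5+1) * (y^9+1) ≤ y^16 := by
    calc (y^5+1) * (y^9+1) ≤ y^6 * y^10 := by gcongr <;> exact u_le hy (by omega)
    _ = y^16 := by ring
  have NU2 : (y^45+1) * (y + 1) ≤ y^14 * y^34 := by
    calc (y^45+1) * (y + 1) ≤ y^46 * y^2 := by gcongr <;> exact u_le hy (by omega)
    _ = y^14 * y^34 := by ring
  have NL2 : y^30 * y^16 ≤ (y^45+1) * (y + 1) := by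
    calc y^30 * y^16 = y^45 * y := by ring
    _ ≤ (y^45+1) * (y + 1) := by gcongr <;> omega
  have hq2up : q2 ≤ y^34 := q_upper hq2 L2 NU2 (by positivity)
  have hq2lo : y^30 ≤ q2 := q_lower hq2 U2 NL2 (by positivity)
  have L3 : y^16 ≤ (y^7+1) * (y^9+1) := by
    calc y^16 = y^7 * y^9 := by ring
    _ ≤ (y^7+1) * (y^9+1) := by gcongr <;> omega
  have U3 : (y^7+1) * (y^9+1) ≤ y^18 := by
    calc (y^7+1) * (y^9+1) ≤ y^8 * y^10 := by gcongr <;> exact u_le hy (by omega)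
    _ = y^18 := by ring
  have NU3 : (y^63+1) * (y + 1) ≤ y^16 * y^50 := by
    calc (y^63+1) * (y + 1) ≤ y^64 * y^2 := by gcongr <;> exact u_le hy (by omega)
    _ = y^16 * y^50 := by ring
  have NL3 : y^46 * y^18 ≤ (y^63+1) * (y + 1) := by
    calc y^46 * y^18 = y^63 * y := by ring
    _ ≤ (y^63+1) * (y + 1) := by gcongr <;> omega
  have hq3up : q3 ≤ y^50 := q_upper hq3 L3 NU3 (by positivity)
  have hq3lo : y^46 ≤ q3 := q_lower hq3 U3 NL3 (by positivity)
  have L4 : y^72 ≤ (y^15+1) * (y^21+1) * (y^35+1) * (y + 1) := by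
    calc y^72 = y^15 * y^21 * y^35 * y := by ring
    _ ≤ (y^15+1) * (y^21+1) * (y^35+1) * (y + 1) := by gcongr <;> omega
  have U4 : (y^15+1) * (y^21+1) * (y^35+1) * (y + 1) ≤ y^76 := by
    calc (y^15+1) * (y^21+1) * (y^35+1) * (y + 1) ≤ y^16 * y^22 * y^36 * y^2 := by gcongr <;> exact u_le hy (by omega)
    _ = y^76 := by ring
  have NU4 : (y^105+1) * (y^3+1) * (y^5+1) * (y^7+1) ≤ y^72 * y^52 := by
    calc (y^105+1) * (y^3+1) * (y^5+1) * (y^7+1) ≤ y^106 * y^4 * y^6 * y^8 := by gcongr <;> exact u_le hy (by omega)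
    _ = y^72 * y^52 := by ring
  have NL4 : y^44 * y^76 ≤ (y^105+1) * (y^3+1) * (y^5+1) * (y^7+1) := by
    calc y^44 * y^76 = y^105 * y^3 * y^5 * y^7 := by ring
    _ ≤ (y^105+1) * (y^3+1) * (y^5+1) * (y^7+1) := by gcongr <;> omega
  have hq4up : q4 ≤ y^52 := q_upper hq4 L4 NU4 (by positivity)
  have hq4lo : y^44 ≤ q4 := q_lower hq4 U4 NL4 (by positivity)
  have L5 : y^216 ≤ (y^45+1) * (y^63+1) * (y^105+1) * (y^3+1) := by
    calc y^216 = y^45 * y^63 * y^105 * y^3 := by ring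
    _ ≤ (y^45+1) * (y^63+1) * (y^105+1) * (y^3+1) := by gcongr <;> omega
  have U5 : (y^45+1) * (y^63+1) * (y^105+1) * (y^3+1) ≤ y^220 := by
    calc (y^45+1) * (y^63+1) * (y^105+1) * (y^3+1) ≤ y^46 * y^64 * y^106 * y^4 := by gcongr <;> exact u_le hy (by omega)
    _ = y^220 := by ring
  have NU5 : (y^315+1) * (y^9+1) * (y^15+1) * (y^21+1) ≤ y^216 * y^148 := by
    calc (y^315+1) * (y^9+1) * (y^15+1) * (y^21+1) ≤ y^316 * y^10 * y^16 * y^22 := by gcongr <;> exact u_le hy (by omega)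
    _ = y^216 * y^148 := by ring
  have NL5 : y^140 * y^220 ≤ (y^315+1) * (y^9+1) * (y^15+1) * (y^21+1) := by
    calc y^140 * y^220 = y^315 * y^9 * y^15 * y^21 := by ring
    _ ≤ (y^315+1) * (y^9+1) * (y^15+1) * (y^21+1) := by gcongr <;> omega
  have hq5up : q5 ≤ y^148 := q_upper hq5 L5 NU5 (by positivity)
  have hq5lo : y^140 ≤ q5 := q_lower hq5 U5 NL5 (by positivity)
  have hq1pos : 1 ≤ q1 := le_trans (hupos 7) hq1lo
  have hq2pos : 1 ≤ q2 := le_trans (hupos 30) hq2lo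
  have hq3pos : 1 ≤ q3 := le_trans (hupos 46) hq3lo
  have hq4pos : 1 ≤ q4 := le_trans (hupos 44) hq4lo
  have hq5pos : 1 ≤ q5 := by
    rcases Nat.eq_zero_or_pos q5 with h | h
    · rw [h, zero_mul] at hq5
      have hp : 0 < (y^315+1) * (y^9+1) * (y^15+1) * (y^21+1) := by positivity
      omega
    · exact h
  -- chain
  have hC0 : 2 * y^35 ≤ 2 * (y^35+1) := by omega
  have h1 : Practical (2 * (y^35+1) * q1) :=
    prac_mul h0 hq1pos (by
      have ha : q1 ≤ y^35 := le_trans hq1up (hpow (by omega))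
      have hb : y^35 ≤ 2*(y^35+1) := by omega
      linarith)
  have hC1 : 2 * y^42 ≤ 2 * (y^35+1) * q1 := by
    calc 2*y^42 = (2*y^35) * y^7 := by ring
    _ ≤ (2*(y^35+1)) * q1 := Nat.mul_le_mul hC0 hq1lo
  have h2 : Practical (2 * (y^35+1) * q1 * q2) :=
    prac_mul h1 hq2pos (by
      have ha : q2 ≤ y^42 := le_trans hq2up (hpow (by omega))
      linarith)
  have hC2 : 2 * y^72 ≤ 2 * (y^35+1) * q1 * q2 := by
    calc 2*y^72 = (2*y^42) * y^30 := by ring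
    _ ≤ (2*(y^35+1)*q1) * q2 := Nat.mul_le_mul hC1 hq2lo
  have h3 : Practical (2 * (y^35+1) * q1 * q2 * q3) :=
    prac_mul h2 hq3pos (by
      have ha : q3 ≤ y^72 := le_trans hq3up (hpow (by omega))
      linarith)
  have hC3 : 2 * y^118 ≤ 2 * (y^35+1) * q1 * q2 * q3 := by
    calc 2*y^118 = (2*y^72) * y^46 := by ring
    _ ≤ (2*(y^35+1)*q1*q2) * q3 := Nat.mul_le_mul hC2 hq3lo
  have h4 : Practical (2 * (y^35+1) * q1 * q2 * q3 * q4) :=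
    prac_mul h3 hq4pos (by
      have ha : q4 ≤ y^118 := le_trans hq4up (hpow (by omega))
      linarith)
  have hC4 : 2 * y^162 ≤ 2 * (y^35+1) * q1 * q2 * q3 * q4 := by
    calc 2*y^162 = (2*y^118) * y^44 := by ring
    _ ≤ (2*(y^35+1)*q1*q2*q3) * q4 := Nat.mul_le_mul hC3 hq4lo
  have h5 : Practical (2 * (y^35+1) * q1 * q2 * q3 * q4 * q5) :=
    prac_mul h4 hq5pos (by
      have ha : q5 ≤ y^162 := le_trans hq5up (hpow (by omega))
      linarith)
  -- identity
  have E1 : 2*(y^35+1)*q1 * (y+1) = 2*(y^35+1) * (y^9+1) := by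
    rw [mul_assoc (2*(y^35+1)) q1 (y+1), hq1]
  have E2 : 2*(y^35+1)*q1*q2 * ((y^5+1)*(y^9+1)*(y+1)) = 2*(y^35+1)*(y^9+1)*((y^45+1)*(y+1)) := by
    calc 2*(y^35+1)*q1*q2 * ((y^5+1)*(y^9+1)*(y+1))
        = (2*(y^35+1)*q1*(y+1)) * (q2*((y^5+1)*(y^9+1))) := by ring
    _ = 2*(y^35+1)*(y^9+1)*((y^45+1)*(y+1)) := by rw [E1, hq2]
  have E2' : 2*(y^35+1)*q1*q2 * (y^5+1) = 2*(y^35+1)*(y^45+1) := by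
    have hpos : 0 < (y^9+1)*(y+1) := by positivity
    apply Nat.eq_of_mul_eq_mul_right hpos
    calc (2*(y^35+1)*q1*q2*(y^5+1)) * ((y^9+1)*(y+1))
        = 2*(y^35+1)*q1*q2 * ((y^5+1)*(y^9+1)*(y+1)) := by ring
    _ = 2*(y^35+1)*(y^9+1)*((y^45+1)*(y+1)) := E2
    _ = (2*(y^35+1)*(y^45+1)) * ((y^9+1)*(y+1)) := by ring
  have E3 : 2*(y^35+1)*q1*q2*q3 * ((y^5+1)*((y^7+1)*(y^9+1)))
      = 2*(y^35+1)*(y^45+1)*((y^63+1)*(y+1)) := by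
    calc 2*(y^35+1)*q1*q2*q3 * ((y^5+1)*((y^7+1)*(y^9+1)))
        = (2*(y^35+1)*q1*q2*(y^5+1)) * (q3*((y^7+1)*(y^9+1))) := by ring
    _ = 2*(y^35+1)*(y^45+1)*((y^63+1)*(y+1)) := by rw [E2', hq3]
  have E4 : 2*(y^35+1)*q1*q2*q3*q4 * ((y^5+1)*((y^7+1)*(y^9+1))*((y^15+1)*(y^21+1)*(y^35+1)*(y+1)))
      = 2*(y^35+1)*(y^45+1)*((y^63+1)*(y+1))*((y^105+1)*(y^3+1)*(y^5+1)*(y^7+1)) := by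
    calc 2*(y^35+1)*q1*q2*q3*q4 * ((y^5+1)*((y^7+1)*(y^9+1))*((y^15+1)*(y^21+1)*(y^35+1)*(y+1)))
        = (2*(y^35+1)*q1*q2*q3 * ((y^5+1)*((y^7+1)*(y^9+1)))) * (q4*((y^15+1)*(y^21+1)*(y^35+1)*(y+1))) := by ring
    _ = 2*(y^35+1)*(y^45+1)*((y^63+1)*(y+1))*((y^105+1)*(y^3+1)*(y^5+1)*(y^7+1)) := by rw [E3, hq4]
  have E4' : 2*(y^35+1)*q1*q2*q3*q4 * ((y^9+1)*(y^15+1)*(y^21+1))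
      = 2*(y^45+1)*(y^63+1)*(y^105+1)*(y^3+1) := by
    have hpos : 0 < (y^5+1)*(y^7+1)*(y+1)*(y^35+1) := by positivity
    apply Nat.eq_of_mul_eq_mul_right hpos
    calc (2*(y^35+1)*q1*q2*q3*q4 * ((y^9+1)*(y^15+1)*(y^21+1))) * ((y^5+1)*(y^7+1)*(y+1)*(y^35+1))
        = 2*(y^35+1)*q1*q2*q3*q4 * ((y^5+1)*((y^7+1)*(y^9+1))*((y^15+1)*(y^21+1)*(y^35+1)*(y+1))) := by ring
    _ = 2*(y^35+1)*(y^45+1)*((y^63+1)*(y+1))*((y^105+1)*(y^3+1)*(y^5+1)*(y^7+1)) := E4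
    _ = (2*(y^45+1)*(y^63+1)*(y^105+1)*(y^3+1)) * ((y^5+1)*(y^7+1)*(y+1)*(y^35+1)) := by ring
  have E5 : 2*(y^35+1)*q1*q2*q3*q4*q5 * ((y^9+1)*(y^15+1)*(y^21+1)*((y^45+1)*(y^63+1)*(y^105+1)*(y^3+1)))
      = 2*(y^45+1)*(y^63+1)*(y^105+1)*(y^3+1)*((y^315+1)*(y^9+1)*(y^15+1)*(y^21+1)) := by
    calc 2*(y^35+1)*q1*q2*q3*q4*q5 * ((y^9+1)*(y^15+1)*(y^21+1)*((y^45+1)*(y^63+1)*(y^105+1)*(y^3+1)))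
        = (2*(y^35+1)*q1*q2*q3*q4 * ((y^9+1)*(y^15+1)*(y^21+1))) * (q5*((y^45+1)*(y^63+1)*(y^105+1)*(y^3+1))) := by ring
    _ = 2*(y^45+1)*(y^63+1)*(y^105+1)*(y^3+1)*((y^315+1)*(y^9+1)*(y^15+1)*(y^21+1)) := by rw [E4', hq5]
  have Efin : 2*(y^35+1)*q1*q2*q3*q4*q5 = 2*(y^315+1) := by
    have hpos : 0 < (y^9+1)*(y^15+1)*(y^21+1)*((y^45+1)*(y^63+1)*(y^105+1)*(y^3+1)) := by positivity
    apply Nat.eq_of_mul_eq_mul_right hpos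
    calc 2*(y^35+1)*q1*q2*q3*q4*q5 * ((y^9+1)*(y^15+1)*(y^21+1)*((y^45+1)*(y^63+1)*(y^105+1)*(y^3+1)))
        = 2*(y^45+1)*(y^63+1)*(y^105+1)*(y^3+1)*((y^315+1)*(y^9+1)*(y^15+1)*(y^21+1)) := E5
    _ = (2*(y^315+1)) * ((y^9+1)*(y^15+1)*(y^21+1)*((y^45+1)*(y^63+1)*(y^105+1)*(y^3+1))) := by ring
  rwa [Efin] at h5
theorem practical_fourth_power_plus_two :
    {q : ℕ | Practical q ∧ Practical (q ^ 4 + 2)}.Infinite ∧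
    ∀ k : ℕ, Practical (2 ^ ((35 * 9 ^ k + 1) / 4)) ∧
      Practical ((2 ^ ((35 * 9 ^ k + 1) / 4)) ^ 4 + 2) := by
  have b0 : Practical 2 := by
    have h := prac_mul prac_one (n := 2) (by norm_num) (by norm_num)
    norm_num at h; exact h
  have b1 := prac_mul b0 (n := 3) (by norm_num) (by norm_num)
  norm_num at b1
  have b2 := prac_mul b1 (n := 11) (by norm_num) (by norm_num)
  norm_num at b2
  have b3 := prac_mul b2 (n := 43) (by norm_num) (by norm_num)
  norm_num at b3
  have b4 := prac_mul b3 (n := 281) (by norm_num) (by norm_num)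
  norm_num at b4
  have b5 := prac_mul b4 (n := 86171) (by norm_num) (by norm_num)
  norm_num at b5
  have key : ∀ k : ℕ, Practical (2 * (2 ^ (35 * 9 ^ k) + 1)) := by
    intro k
    induction k with
    | zero =>
      have h : 2 * (2 ^ (35 * 9 ^ 0) + 1) = 797478 * 86171 := by norm_num
      rw [h]; exact b5
    | succ k ih =>
      have hy : 2 ≤ 2 ^ 9 ^ k := by
        have h1 : 1 ≤ 9 ^ k := Nat.one_le_pow _ _ (by norm_num)
        calc 2 = 2 ^ 1 := rfl
        _ ≤ 2 ^ 9 ^ k := Nat.pow_le_pow_right (by norm_num) h1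
      have h35 : (2 ^ 9 ^ k) ^ 35 = 2 ^ (35 * 9 ^ k) := by
        rw [← pow_mul, Nat.mul_comm]
      have h315 : (2 ^ 9 ^ k) ^ 315 = 2 ^ (35 * 9 ^ (k + 1)) := by
        rw [← pow_mul]
        congr 1
        rw [pow_succ]; ring
      have hstep := step hy (by rw [h35]; exact ih)
      rwa [h315] at hstep
  have hdvd : ∀ k : ℕ, 4 ∣ 35 * 9 ^ k + 1 := by
    intro k; induction k with
    | zero => norm_num
    | succ k ih => rw [pow_succ]; omega
  have hq : ∀ k : ℕ, (2 ^ ((35 * 9 ^ k + 1) / 4)) ^ 4 + 2 = 2 * (2 ^ (35 * 9 ^ k) + 1) := by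
    intro k
    have hdm : (35 * 9 ^ k + 1) / 4 * 4 = 35 * 9 ^ k + 1 := Nat.div_mul_cancel (hdvd k)
    rw [← pow_mul, hdm, pow_succ]
    ring
  have hmem : ∀ k : ℕ, Practical (2 ^ ((35 * 9 ^ k + 1) / 4)) ∧
      Practical ((2 ^ ((35 * 9 ^ k + 1) / 4)) ^ 4 + 2) := by
    intro k
    exact ⟨prac_two_pow _, by rw [hq k]; exact key k⟩
  refine ⟨?_, hmem⟩
  apply Set.infinite_of_injective_forall_mem
    (f := fun k : ℕ => 2 ^ ((35 * 9 ^ k + 1) / 4))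
  · have mono : StrictMono (fun k : ℕ => 2 ^ ((35 * 9 ^ k + 1) / 4)) := by
      intro a b hab
      have h0 : 9 ^ a < 9 ^ b := Nat.pow_lt_pow_right (by norm_num) hab
      have h1 : 35 * 9 ^ a + 1 < 35 * 9 ^ b + 1 := by
        have := h0; omega
      have h2 := Nat.div_lt_div_of_lt_of_dvd (hdvd b) h1
      exact Nat.pow_lt_pow_right (by norm_num) h2
    exact mono.injective
  · exact fun k => hmem k
end

section
/- Let p₁ < p₂ < ... < p_k be distinct primes and let a₁, ..., a_k be positive integers. Then m = p₁^{a₁} p₂^{a₂} ⋯ p_k^{a_k} is a practical number if and only if p₁ = 2 and for every j with 1 < j ≤ k one has p_j − 1 ≤ σ(p₁^{a₁} p₂^{a₂} ⋯ p_{j−1}^{a_{j−1}}), where σ(n) denotes the sum of the positive divisors of n. -/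
/-!
Necessity: every divisor of `m` below `p_j` divides the prefix
`M = p₁^{a₁} ⋯ p_{j-1}^{a_{j-1}}`, because all prime factors of `m / M` are at least `p_j`.
So if `σ(M) + 1 < p_j`, the number `σ(M) + 1 ≤ m` would be a sum of distinct divisors of `M`,
which is absurd. The empty prefix with the bound `3` in place of `p_j` forces `p₁ = 2`.

Sufficiency: one proves the stronger property that every `n ≤ σ(m)` is a sum of distinct
divisors of `m`, adding one prime power at a time. If `p ∤ m` and `p - 1 ≤ σ(m)`, it passes
from `m p^b` to `m p^{b+1}`: write `n = c p^{b+1} + r` with `c ≤ σ(m)` and `r ≤ σ(m p^b)`, which is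
possible since `p^{b+1} - 1 = (p - 1) σ(p^b) ≤ σ(m p^b)`.
-/

open Finset ArithmeticFunction
open scoped ArithmeticFunction.sigma

def IsSubsetSumOfDivisors (m n : ℕ) : Prop :=
  ∃ s ⊆ m.divisors, ∑ d ∈ s, d = n

/-- Equivalent to `Practical`, but this is the form that is preserved when a coprime prime power
is multiplied in. -/
def StronglyPractical (m : ℕ) : Prop :=
  0 < m ∧ ∀ n ≤ σ 1 m, IsSubsetSumOfDivisors m n

lemma IsSubsetSumOfDivisors.le_sigma_one {m n : ℕ} (h : IsSubsetSumOfDivisors m n) :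
    n ≤ σ 1 m := by
  obtain ⟨s, hs, rfl⟩ := h
  rw [sigma_one_apply]
  exact sum_le_sum_of_subset hs

lemma IsSubsetSumOfDivisors.add_mul_pow_succ {m p b n c : ℕ} (hp : p ≠ 0) (hpm : ¬p ∣ m)
    (hn : IsSubsetSumOfDivisors (m * p ^ b) n) (hc : IsSubsetSumOfDivisors m c) :
    IsSubsetSumOfDivisors (m * p ^ (b + 1)) (n + c * p ^ (b + 1)) := by
  obtain ⟨s, hs, rfl⟩ := hn
  obtain ⟨t, ht, rfl⟩ := hc
  have hm : m ≠ 0 := by rintro rfl; exact hpm (dvd_zero p)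
  have hP : p ^ (b + 1) ≠ 0 := pow_ne_zero _ hp
  refine ⟨s ∪ t.image (· * p ^ (b + 1)), union_subset ?_ ?_, ?_⟩
  · exact hs.trans (Nat.divisors_subset_of_dvd (mul_ne_zero hm hP)
      (mul_dvd_mul_left m (pow_dvd_pow p b.le_succ)))
  · intro x hx
    obtain ⟨d, hd, rfl⟩ := mem_image.1 hx
    exact Nat.mem_divisors.2 ⟨mul_dvd_mul (Nat.dvd_of_mem_divisors (ht hd)) dvd_rfl,
      mul_ne_zero hm hP⟩
  · have hdisj : Disjoint s (t.image (· * p ^ (b + 1))) := by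
      refine disjoint_right.2 fun x hx hxs => hpm ?_
      obtain ⟨d, -, rfl⟩ := mem_image.1 hx
      have hdvd : p ^ b * p ∣ p ^ b * m := by
        rw [← pow_succ, mul_comm (p ^ b)]
        exact (dvd_mul_left _ d).trans (Nat.dvd_of_mem_divisors (hs hxs))
      exact (Nat.mul_dvd_mul_iff_left (pow_pos (Nat.pos_of_ne_zero hp) b)).1 hdvd
    rw [sum_union hdisj, sum_image fun x _ y _ h => Nat.eq_of_mul_eq_mul_right
      (Nat.pos_of_ne_zero hP) h, sum_mul]

lemma StronglyPractical.practical {m : ℕ} (h : StronglyPractical m) : Practical m :=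
  ⟨h.1, fun n _ hn => h.2 n (hn.trans
    (IsSubsetSumOfDivisors.le_sigma_one ⟨{m}, by simpa using h.1.ne', sum_singleton _ _⟩))⟩

lemma stronglyPractical_one : StronglyPractical 1 := by
  refine ⟨one_pos, fun n hn => ?_⟩
  rw [isMultiplicative_sigma.map_one] at hn
  interval_cases n
  · exact ⟨∅, empty_subset _, sum_empty⟩
  · exact ⟨{1}, by simp, sum_singleton _ _⟩

lemma sigma_one_prime_pow_succ {p : ℕ} (hp : p.Prime) (b : ℕ) :
    σ 1 (p ^ (b + 1)) = σ 1 (p ^ b) + p ^ (b + 1) := by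
  rw [sigma_one_apply_prime_pow hp, sigma_one_apply_prime_pow hp, sum_range_succ]

lemma sub_one_mul_sigma_one_prime_pow_add_one {p : ℕ} (hp : p.Prime) (b : ℕ) :
    (p - 1) * σ 1 (p ^ b) + 1 = p ^ (b + 1) := by
  have h := geom_sum_mul_add (p - 1) (b + 1)
  rw [Nat.sub_add_cancel hp.one_le] at h
  rw [sigma_one_apply_prime_pow hp, mul_comm, h]

lemma sigma_one_mul_prime_pow {m p : ℕ} (hp : p.Prime) (hpm : ¬p ∣ m) (b : ℕ) :
    σ 1 (m * p ^ b) = σ 1 m * σ 1 (p ^ b) :=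
  isMultiplicative_sigma.map_mul_of_coprime ((hp.coprime_iff_not_dvd.2 hpm).symm.pow_right b)

lemma Nat.exists_mul_le_and_sub_le {n S T P : ℕ} (hP : 0 < P) (hPT : P ≤ T + 1)
    (hn : n ≤ T + S * P) : ∃ c ≤ S, c * P ≤ n ∧ n - c * P ≤ T := by
  rcases le_or_gt (S * P) n with h | h
  · exact ⟨S, le_rfl, h, by omega⟩
  · refine ⟨n / P, ((Nat.div_lt_iff_lt_mul hP).2 h).le, Nat.div_mul_le_self n P, ?_⟩
    have := Nat.mod_lt n hP
    have := Nat.div_add_mod' n P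
    omega

lemma StronglyPractical.mul_prime_pow_succ {m p b : ℕ} (hp : p.Prime) (hpm : ¬p ∣ m)
    (hm : StronglyPractical m) (hmb : StronglyPractical (m * p ^ b))
    (hP : p ^ (b + 1) ≤ σ 1 (m * p ^ b) + 1) : StronglyPractical (m * p ^ (b + 1)) := by
  have hσ : σ 1 (m * p ^ (b + 1)) = σ 1 (m * p ^ b) + σ 1 m * p ^ (b + 1) := by
    rw [sigma_one_mul_prime_pow hp hpm, sigma_one_mul_prime_pow hp hpm,
      sigma_one_prime_pow_succ hp, mul_add]
  refine ⟨Nat.mul_pos hm.1 (pow_pos hp.pos _), fun n hn => ?_⟩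
  obtain ⟨c, hc, hcn, hrest⟩ := Nat.exists_mul_le_and_sub_le (pow_pos hp.pos _) hP (hσ ▸ hn)
  have h := (hmb.2 _ hrest).add_mul_pow_succ hp.ne_zero hpm (hm.2 c hc)
  rwa [Nat.sub_add_cancel hcn] at h

lemma StronglyPractical.mul_prime_pow {m p : ℕ} (hm : StronglyPractical m) (hp : p.Prime)
    (hpm : ¬p ∣ m) (hpσ : p - 1 ≤ σ 1 m) (a : ℕ) : StronglyPractical (m * p ^ a) := by
  induction a with
  | zero => simpa using hm
  | succ b ih =>
    refine hm.mul_prime_pow_succ hp hpm ih ?_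
    calc p ^ (b + 1) = (p - 1) * σ 1 (p ^ b) + 1 :=
          (sub_one_mul_sigma_one_prime_pow_add_one hp b).symm
      _ ≤ σ 1 m * σ 1 (p ^ b) + 1 := by gcongr
      _ = σ 1 (m * p ^ b) + 1 := by rw [sigma_one_mul_prime_pow hp hpm]

lemma Nat.dvd_of_dvd_mul_of_lt_prime_factors {d M R q : ℕ}
    (hR : ∀ r, r.Prime → r ∣ R → q ≤ r) (hd0 : d ≠ 0) (hdq : d < q) (hd : d ∣ M * R) :
    d ∣ M :=
  Nat.Coprime.dvd_of_dvd_mul_right (Nat.coprime_of_dvd fun r hr hrd hrR =>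
    (Nat.le_of_dvd (Nat.pos_of_ne_zero hd0) hrd).not_gt (hdq.trans_le (hR r hr hrR))) hd

lemma Practical.sub_one_le_sigma_one_of_dvd {m M q : ℕ} (h : Practical m) (hM : M ≠ 0)
    (hqm : q ≤ m) (hdvd : ∀ d ∈ m.divisors, d < q → d ∣ M) : q - 1 ≤ σ 1 M := by
  by_contra! hlt
  obtain ⟨s, hs, hsum⟩ := h.2 (σ 1 M + 1) (by omega) (by omega)
  have hsM : s ⊆ M.divisors := fun d hd => Nat.mem_divisors.2
    ⟨hdvd d (hs hd) (by have := single_le_sum (fun i _ => Nat.zero_le i) hd; omega), hM⟩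
  have := IsSubsetSumOfDivisors.le_sigma_one ⟨s, hsM, hsum⟩
  omega

section PrimePowerProduct

variable {ι : Type*} {p a : ι → ℕ}

lemma exists_eq_of_prime_dvd_prod_pow (hp : ∀ i, (p i).Prime) {s : Finset ι} {r : ℕ}
    (hr : r.Prime) (h : r ∣ ∏ i ∈ s, p i ^ a i) : ∃ i ∈ s, r = p i := by
  obtain ⟨i, hi, hri⟩ := (hr.prime.dvd_finsetProd_iff _).1 h
  exact ⟨i, hi, (Nat.prime_dvd_prime_iff_eq hr (hp i)).1 (hr.dvd_of_dvd_pow hri)⟩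

lemma le_prod_pow [Fintype ι] (hp : ∀ i, 0 < p i) {j : ι} (ha : 0 < a j) :
    p j ≤ ∏ i, p i ^ a i :=
  (Nat.le_self_pow ha.ne' _).trans
    (single_le_prod' (fun i _ => Nat.one_le_pow _ _ (hp i)) (mem_univ j))

end PrimePowerProduct

lemma Fin.prod_filter_val_lt_succ {M : Type*} [CommMonoid M] {k j : ℕ} (f : Fin k → M)
    (hj : j < k) :
    ∏ i ∈ univ.filter (fun i : Fin k => (i : ℕ) < j + 1), f i =
      (∏ i ∈ univ.filter (fun i : Fin k => (i : ℕ) < j), f i) * f ⟨j, hj⟩ := by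
  rw [mul_comm, ← prod_insert (by simp)]
  congr 1
  ext i
  simp only [mem_filter, mem_univ, true_and, mem_insert, Fin.ext_iff]
  omega

section FinPrimePowerProduct

variable {k : ℕ} {p a : Fin k → ℕ}

lemma Practical.sub_one_le_sigma_one_prod_lt (hp : ∀ i, (p i).Prime) (hmono : Monotone p)
    (h : Practical (∏ i, p i ^ a i)) (j : Fin k) {q : ℕ} (hqj : q ≤ p j)
    (hqm : q ≤ ∏ i, p i ^ a i) :
    q - 1 ≤ σ 1 (∏ i ∈ univ.filter (· < j), p i ^ a i) := by
  refine h.sub_one_le_sigma_one_of_dvd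
    (prod_ne_zero_iff.2 fun i _ => pow_ne_zero _ (hp i).ne_zero) hqm fun d hd hdq => ?_
  rw [← prod_filter_mul_prod_filter_not univ (· < j)] at hd
  refine Nat.dvd_of_dvd_mul_of_lt_prime_factors (fun r hr hrR => ?_)
    (Nat.pos_of_mem_divisors hd).ne' hdq (Nat.dvd_of_mem_divisors hd)
  obtain ⟨i, hi, rfl⟩ := exists_eq_of_prime_dvd_prod_pow hp hr hrR
  exact hqj.trans (hmono (not_lt.1 (mem_filter.1 hi).2))

lemma stronglyPractical_prod_pow (hp : ∀ i, (p i).Prime) (hinj : Function.Injective p)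
    (hσ : ∀ j, p j - 1 ≤ σ 1 (∏ i ∈ univ.filter (· < j), p i ^ a i)) :
    StronglyPractical (∏ i, p i ^ a i) := by
  suffices ∀ j ≤ k,
      StronglyPractical (∏ i ∈ univ.filter (fun i : Fin k => (i : ℕ) < j), p i ^ a i) by
    simpa using this k le_rfl
  intro j
  induction j with
  | zero => intro _; simpa using stronglyPractical_one
  | succ j ih =>
    intro hj
    rw [Fin.prod_filter_val_lt_succ _ hj]
    refine (ih (Nat.le_of_succ_le hj)).mul_prime_pow (hp _) (fun hdvd => ?_) (hσ ⟨j, hj⟩) _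
    obtain ⟨i, hi, hpi⟩ := exists_eq_of_prime_dvd_prod_pow hp (hp _) hdvd
    rw [← hinj hpi] at hi
    simp at hi

end FinPrimePowerProduct

/-- Stewart's structure theorem for practical numbers. -/
theorem stewart_structure_theorem (k : ℕ) (hk : 0 < k)
    (p : Fin k → ℕ) (a : Fin k → ℕ)
    (hp : ∀ i, (p i).Prime) (hmono : StrictMono p) (ha : ∀ i, 0 < a i)
    (m : ℕ) (hm : m = ∏ i, p i ^ a i) :
    Practical m ↔
      p ⟨0, hk⟩ = 2 ∧
      ∀ j : Fin k, 0 < (j : ℕ) →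
        p j - 1 ≤ ∑ d ∈ Nat.divisors (∏ i ∈ Finset.univ.filter (fun i => i < j), p i ^ a i), d := by
  subst hm
  simp only [← sigma_one_apply]
  have hle : ∀ j, p j ≤ ∏ i, p i ^ a i := fun j => le_prod_pow (fun i => (hp i).pos) (ha j)
  constructor
  · intro h
    refine ⟨?_, fun j _ => h.sub_one_le_sigma_one_prod_lt hp hmono.monotone j le_rfl (hle j)⟩
    by_contra hne
    have h3 : 3 ≤ p ⟨0, hk⟩ := by have := (hp ⟨0, hk⟩).two_le; omega
    have := h.sub_one_le_sigma_one_prod_lt hp hmono.monotone ⟨0, hk⟩ h3 (h3.trans (hle _))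
    simp [Fin.lt_def] at this
  · rintro ⟨h2, hσ⟩
    refine (stronglyPractical_prod_pow hp hmono.injective fun j => ?_).practical
    rcases Nat.eq_zero_or_pos j with h0 | hj
    · obtain rfl : j = ⟨0, hk⟩ := Fin.ext h0
      simp [Fin.lt_def, h2]
    · exact hσ j hj
end

section
/- Let m be a practical number. Then mn is a practical number for every integer n with 1 ≤ n ≤ σ(m) + 1, where σ(m) is the sum of the positive divisors of m. -/
lemma subset_sum_complete (D : Finset ℕ)
    (hD : ∀ d ∈ D, d ≤ 1 + ∑ e ∈ D.filter (· < d), e) :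
    ∀ k ≤ ∑ d ∈ D, d, ∃ S ⊆ D, ∑ d ∈ S, d = k := by
  induction D using Finset.strongInduction with
  | _ D ih =>
    intro k hk
    rcases D.eq_empty_or_nonempty with rfl | hne
    · simp only [Finset.sum_empty, Nat.le_zero] at hk
      exact ⟨∅, by simp, by simp [hk]⟩
    · set M := D.max' hne with hMdef
      have hMmem : M ∈ D := D.max'_mem hne
      have hle : ∀ e ∈ D, e ≤ M := fun e he => D.le_max' e he
      set D' := D.erase M with hD'def
      have hfilt : D.filter (· < M) = D' := by
        ext e
        simp only [Finset.mem_filter, Finset.mem_erase, hD'def]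
        constructor
        · rintro ⟨he, hlt⟩; exact ⟨Nat.ne_of_lt hlt, he⟩
        · rintro ⟨hne', he⟩; exact ⟨he, lt_of_le_of_ne (hle e he) hne'⟩
      have hsum : ∑ d ∈ D, d = M + ∑ d ∈ D', d := (Finset.add_sum_erase D id hMmem).symm
      have hss : D' ⊂ D := Finset.erase_ssubset hMmem
      have hD' : ∀ d ∈ D', d ≤ 1 + ∑ e ∈ D'.filter (· < d), e := by
        intro d hd
        have hdD : d ∈ D := Finset.mem_of_mem_erase hd
        have : D'.filter (· < d) = D.filter (· < d) := by
          ext e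
          simp only [Finset.mem_filter, Finset.mem_erase, hD'def]
          constructor
          · rintro ⟨⟨_, he⟩, hlt⟩; exact ⟨he, hlt⟩
          · rintro ⟨he, hlt⟩
            have hdM : d ≤ M := hle d hdD
            have : e < M := lt_of_lt_of_le hlt hdM
            exact ⟨⟨Nat.ne_of_lt this, he⟩, hlt⟩
        rw [this]
        exact hD d hdD
      by_cases hk' : k ≤ ∑ d ∈ D', d
      · obtain ⟨S, hS1, hS2⟩ := ih D' hss hD' k hk'
        exact ⟨S, hS1.trans (Finset.erase_subset _ _), hS2⟩
      · push_neg at hk'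
        have hM1 : M ≤ 1 + ∑ d ∈ D', d := by
          have := hD M hMmem
          rwa [hfilt] at this
        have hMk : M ≤ k := by omega
        have hkM : k - M ≤ ∑ d ∈ D', d := by omega
        obtain ⟨S, hS1, hS2⟩ := ih D' hss hD' (k - M) hkM
        have hMS : M ∉ S := fun h => (Finset.mem_erase.mp (hS1 h)).1 rfl
        refine ⟨insert M S, ?_, ?_⟩
        · exact Finset.insert_subset hMmem (hS1.trans (Finset.erase_subset _ _))
        · rw [Finset.sum_insert hMS, hS2]
          omega

lemma practical_rep_sigma (m : ℕ) (hm : Practical m) :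
    ∀ k ≤ ∑ d ∈ m.divisors, d, ∃ S ⊆ m.divisors, ∑ d ∈ S, d = k := by
  apply subset_sum_complete
  intro d hd
  have hd1 : 1 ≤ d := Nat.pos_of_mem_divisors hd
  rcases Nat.eq_or_lt_of_le hd1 with h1 | h2
  · omega
  · have hdm : d ≤ m := Nat.le_of_dvd hm.1 (Nat.dvd_of_mem_divisors hd)
    obtain ⟨S, hS1, hS2⟩ := hm.2 (d - 1) (by omega) (by omega)
    have hSfilt : S ⊆ m.divisors.filter (· < d) := by
      intro s hs
      refine Finset.mem_filter.mpr ⟨hS1 hs, ?_⟩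
      have : s ≤ ∑ x ∈ S, x := Finset.single_le_sum (f := fun x => x) (fun _ _ => Nat.zero_le _) hs
      omega
    have : ∑ x ∈ S, x ≤ ∑ e ∈ m.divisors.filter (· < d), e :=
      Finset.sum_le_sum_of_subset hSfilt
    omega

theorem practical_mul_le_sigma_add_one (m : ℕ) (hm : Practical m)
    (n : ℕ) (h1 : 1 ≤ n) (h2 : n ≤ (∑ d ∈ m.divisors, d) + 1) :
    Practical (m * n) := by
  obtain ⟨hm0, hmrep⟩ := hm
  have hmn0 : 0 < m * n := Nat.mul_pos hm0 h1
  refine ⟨hmn0, fun k hk1 hk2 => ?_⟩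
  set a := k / n with ha
  set b := k % n with hb
  have hbn : b < n := Nat.mod_lt _ h1
  have hkab : a * n + b = k := by rw [Nat.mul_comm]; exact Nat.div_add_mod k n
  have ham : a ≤ m := by
    have : a ≤ m * n / n := Nat.div_le_div_right hk2
    rwa [Nat.mul_div_cancel _ h1] at this
  -- divisors of m are divisors of m*n
  have hdvd : ∀ d ∈ m.divisors, d ∈ (m * n).divisors := by
    intro d hd
    exact Nat.mem_divisors.mpr ⟨(Nat.dvd_of_mem_divisors hd).mul_right n, hmn0.ne'⟩
  have hdvdn : ∀ d ∈ m.divisors, d * n ∈ (m * n).divisors := by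
    intro d hd
    exact Nat.mem_divisors.mpr
      ⟨Nat.mul_dvd_mul (Nat.dvd_of_mem_divisors hd) dvd_rfl, hmn0.ne'⟩
  -- representation of the `b` part
  obtain ⟨T, hT1, hT2⟩ : ∃ T ⊆ m.divisors, ∑ d ∈ T, d = b := by
    rcases Nat.eq_zero_or_pos b with hb0 | hb0
    · exact ⟨∅, by simp, by simp [hb0]⟩
    · exact practical_rep_sigma m ⟨hm0, hmrep⟩ b (by omega)
  -- representation of the `a` part
  obtain ⟨S, hS1, hS2⟩ : ∃ S ⊆ m.divisors, ∑ d ∈ S, d = a := by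
    rcases Nat.eq_zero_or_pos a with ha0 | ha0
    · exact ⟨∅, by simp, by simp [ha0]⟩
    · exact hmrep a ha0 ham
  set S' := S.image (· * n) with hS'
  have hS'sum : ∑ d ∈ S', d = a * n := by
    rw [hS', Finset.sum_image (by intro x _ y _ h; exact Nat.eq_of_mul_eq_mul_right h1 h)]
    rw [← Finset.sum_mul, hS2]
  have hdisj : Disjoint S' T := by
    rw [Finset.disjoint_left]
    intro x hx hxT
    rw [hS', Finset.mem_image] at hx
    obtain ⟨d, hd, rfl⟩ := hx
    have hd1 : 1 ≤ d := Nat.pos_of_mem_divisors (hS1 hd)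
    have hxb : d * n ≤ ∑ t ∈ T, t := Finset.single_le_sum (f := fun x => x) (fun _ _ => Nat.zero_le _) hxT
    rw [hT2] at hxb
    have : n ≤ d * n := Nat.le_mul_of_pos_left n hd1
    omega
  refine ⟨S' ∪ T, ?_, ?_⟩
  · intro x hx
    rcases Finset.mem_union.mp hx with hx | hx
    · rw [hS', Finset.mem_image] at hx
      obtain ⟨d, hd, rfl⟩ := hx
      exact hdvdn d (hS1 hd)
    · exact hdvd x (hT1 hx)
  · rw [Finset.sum_union hdisj, hS'sum, hT2, hkab]
end

section
/- For every nonnegative integer k, both 2(3^(3^k·70) − 1) and 2(3^(3^k·70) + 1) are practical numbers. -/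
namespace Practical

theorem exists_subset_sum {m n : ℕ} (hm : Practical m) (hn : n ≤ m) :
    ∃ s ⊆ m.divisors, ∑ d ∈ s, d = n := by
  rcases Nat.eq_zero_or_pos n with rfl | hn0
  · exact ⟨∅, Finset.empty_subset _, rfl⟩
  · exact hm.2 n hn0 hn

theorem one : Practical 1 :=
  ⟨one_pos, fun _ _ _ => ⟨{1}, by simp, by simp; omega⟩⟩

theorem mul {m n : ℕ} (hm : Practical m) (hn : 0 < n) (hnm : n ≤ m + 1) :
    Practical (m * n) := by
  refine ⟨Nat.mul_pos hm.1 hn, fun N _ hN => ?_⟩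
  have hmn : m * n ≠ 0 := (Nat.mul_pos hm.1 hn).ne'
  have hrem : N % n < n := Nat.mod_lt N hn
  obtain ⟨S, hSdvd, hSsum⟩ := hm.exists_subset_sum (n := N % n) (by omega)
  obtain ⟨T, hTdvd, hTsum⟩ := hm.exists_subset_sum (n := N / n)
    (Nat.div_le_of_le_mul (by rwa [mul_comm] at hN))
  have hS_lt : ∀ d ∈ S, d < n := fun d hd =>
    (hSsum ▸ Finset.single_le_sum (fun _ _ => Nat.zero_le _) hd).trans_lt hrem
  have hdisj : Disjoint S (T.image (n * ·)) := by
    refine Finset.disjoint_right.2 fun d hd hdS => ?_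
    obtain ⟨e, he, rfl⟩ := Finset.mem_image.1 hd
    have := hS_lt _ hdS
    have := Nat.pos_of_mem_divisors (hTdvd he)
    nlinarith
  refine ⟨S ∪ T.image (n * ·), fun d hd => ?_, ?_⟩
  · rcases Finset.mem_union.1 hd with hd | hd
    · exact Nat.mem_divisors.2 ⟨(Nat.dvd_of_mem_divisors (hSdvd hd)).mul_right n, hmn⟩
    · obtain ⟨e, he, rfl⟩ := Finset.mem_image.1 hd
      exact Nat.mem_divisors.2
        ⟨mul_comm n e ▸ mul_dvd_mul_right (Nat.dvd_of_mem_divisors (hTdvd he)) n, hmn⟩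
  · rw [Finset.sum_union hdisj, Finset.sum_image fun _ _ _ _ => Nat.eq_of_mul_eq_mul_left hn,
      ← Finset.mul_sum, hSsum, hTsum, Nat.mod_add_div]

end Practical

-- Stewart's criterion for practical numbers, with `σ m` weakened to `m`.
def StewartChain : ℕ → List ℕ → Prop
  | _, [] => True
  | m, n :: ns => 0 < n ∧ n ≤ m + 1 ∧ StewartChain (m * n) ns

theorem Practical.mul_prod {m : ℕ} {ns : List ℕ} (hm : Practical m) (h : StewartChain m ns) :
    Practical (m * ns.prod) := by
  induction ns generalizing m with
  | nil => simpa using hm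
  | cons n ns ih =>
    obtain ⟨hn, hnm, h⟩ := h
    rw [List.prod_cons, ← mul_assoc]
    exact ih (hm.mul hn hnm) h

theorem practical_two_mul_three_pow_70_sub_one : Practical (2 * (3 ^ 70 - 1)) := by
  convert Practical.one.mul_prod
    (ns := [2, 2, 2, 2, 11, 11, 61, 71, 547, 1093, 2664097031, 374857981681])
    (by norm_num [StewartChain]) using 1
  norm_num

theorem practical_two_mul_three_pow_70_add_one : Practical (2 * (3 ^ 70 + 1)) := by
  convert Practical.one.mul_prod
    (ns := [2, 2, 5, 5, 29, 1181, 16493, 28596961, 32839661, 94373861])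
    (by norm_num [StewartChain]) using 1
  norm_num

theorem Practical.two_mul_pow_six_sub_one {x : ℕ} (h : Practical (2 * (x ^ 2 - 1))) :
    Practical (2 * (x ^ 6 - 1)) := by
  have hx : 2 ≤ x := by
    by_contra! hx
    interval_cases x <;> simp [Practical] at h
  have hx2 : 1 ≤ x ^ 2 := Nat.one_le_pow _ _ (by omega)
  have hx6 : 1 ≤ x ^ 6 := Nat.one_le_pow _ _ (by omega)
  have hxx : x ≤ x ^ 2 := by nlinarith
  convert h.mul_prod (ns := [x ^ 2 - x + 1, x ^ 2 + x + 1]) ?_ using 1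
  · simp only [List.prod_cons, List.prod_nil, mul_one]
    zify [hx2, hx6, hxx]
    ring
  · refine ⟨by omega, ?_, by omega, ?_, trivial⟩
    · zify [hx2, hxx]
      nlinarith
    · zify [hx2, hxx]
      nlinarith

-- Coefficients are listed from the leading one down.
def evalCoeffs {R : Type*} [Semiring R] (z : R) : List R → R
  | [] => 0
  | c :: cs => c * z ^ cs.length + evalCoeffs z cs

section Bounds

variable {R : Type*} [CommRing R] [LinearOrder R] [IsStrictOrderedRing R]

theorem abs_evalCoeffs_mul_le {C z : R} (hz : 1 ≤ z) {cs : List R} (hcs : ∀ c ∈ cs, |c| ≤ C) :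
    |evalCoeffs z cs| * (z - 1) ≤ C * (z ^ cs.length - 1) := by
  induction cs with
  | nil => simp [evalCoeffs]
  | cons c cs ih =>
    have hc : |c| ≤ C := hcs c List.mem_cons_self
    have ih := ih fun d hd => hcs d (List.mem_cons_of_mem c hd)
    have hzn : 0 ≤ z ^ cs.length := pow_nonneg (by linarith) _
    have htri : |evalCoeffs z (c :: cs)| ≤ |c| * z ^ cs.length + |evalCoeffs z cs| := by
      simpa [evalCoeffs, abs_mul, abs_of_nonneg hzn] using abs_add_le (c * z ^ cs.length) _
    calc |evalCoeffs z (c :: cs)| * (z - 1)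
        ≤ (|c| * z ^ cs.length + |evalCoeffs z cs|) * (z - 1) :=
          mul_le_mul_of_nonneg_right htri (by linarith)
      _ ≤ C * z ^ cs.length * (z - 1) + C * (z ^ cs.length - 1) := by
          have := mul_le_mul_of_nonneg_right (mul_le_mul_of_nonneg_right hc hzn)
            (sub_nonneg.2 hz)
          linarith
      _ = C * (z ^ (c :: cs).length - 1) := by simp only [List.length_cons]; ring

theorem evalCoeffs_one_cons_bounds {C z : R} (hC : 0 < C) (hz : 2 * C + 1 ≤ z) {cs : List R}
    (hcs : ∀ c ∈ cs, |c| ≤ C) :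
    z ^ cs.length < 2 * evalCoeffs z (1 :: cs) ∧
      2 * evalCoeffs z (1 :: cs) < 3 * z ^ cs.length := by
  have hz1 : 0 < z - 1 := by linarith
  have hzn : 1 ≤ z ^ cs.length := one_le_pow₀ (by linarith)
  have hmul := abs_evalCoeffs_mul_le (z := z) (by linarith) hcs
  have hsmall : 2 * |evalCoeffs z cs| < z ^ cs.length := by
    have : 2 * |evalCoeffs z cs| * (z - 1) ≤ (z ^ cs.length - 1) * (z - 1) := by
      nlinarith [mul_nonneg (by linarith : 0 ≤ z - 1 - 2 * C) (sub_nonneg.2 hzn)]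
    linarith [le_of_mul_le_mul_right this hz1]
  simp only [evalCoeffs, one_mul]
  constructor <;> linarith [neg_abs_le (evalCoeffs z cs), le_abs_self (evalCoeffs z cs)]

end Bounds

-- The cyclotomic factors `Φ₆ Φ₃₀ Φ₄₂` and `Φ₂₁₀` of `Φ₆(X³⁵) = X⁷⁰ - X³⁵ + 1`.
def phi6Phi30Phi42Coeffs : List ℤ :=
  [1, 1, 0, -1, -1, -1, 0, 0, 0, 0, 1, 1, 1, 0, 0, 0, 0, -1, -1, -1, 0, 1, 1]

def phi210Coeffs : List ℤ :=
  [1, -1, 1, 0, 0, 1, -1, 2, -1, 1, 0, 0, 1, -1, 1, -1, 1, -1, 0, 0, -1, 0, -1, 0, -1, 0, -1, 0,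
    -1, 0, 0, -1, 1, -1, 1, -1, 1, 0, 0, 1, -1, 2, -1, 1, 0, 0, 1, -1, 1]

theorem evalCoeffs_phi6Phi30Phi42_mul_phi210 (z : ℤ) :
    evalCoeffs z phi6Phi30Phi42Coeffs * evalCoeffs z phi210Coeffs = z ^ 70 - z ^ 35 + 1 := by
  simp only [evalCoeffs, phi6Phi30Phi42Coeffs, phi210Coeffs, List.length_cons, List.length_nil]
  ring

theorem exists_pow_105_add_one_eq_mul {z : ℕ} (hz : 5 ≤ z) :
    ∃ b a : ℕ, z ^ 105 + 1 = (z ^ 35 + 1) * b * a ∧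
      z ^ 22 < 2 * b ∧ 2 * b < 3 * z ^ 22 ∧ z ^ 48 < 2 * a ∧ 2 * a < 3 * z ^ 48 := by
  have hz' : (2 * 2 + 1 : ℤ) ≤ z := by exact_mod_cast hz
  obtain ⟨hb_lo, hb_hi⟩ : (z : ℤ) ^ 22 < 2 * evalCoeffs (z : ℤ) phi6Phi30Phi42Coeffs ∧
      2 * evalCoeffs (z : ℤ) phi6Phi30Phi42Coeffs < 3 * (z : ℤ) ^ 22 :=
    evalCoeffs_one_cons_bounds (C := (2 : ℤ)) (by norm_num) hz' (by decide)
  obtain ⟨ha_lo, ha_hi⟩ : (z : ℤ) ^ 48 < 2 * evalCoeffs (z : ℤ) phi210Coeffs ∧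
      2 * evalCoeffs (z : ℤ) phi210Coeffs < 3 * (z : ℤ) ^ 48 :=
    evalCoeffs_one_cons_bounds (C := (2 : ℤ)) (by norm_num) hz' (by decide)
  have hz_pos : (0 : ℤ) < z := by linarith
  obtain ⟨b, hb⟩ := Int.eq_ofNat_of_zero_le (by linarith [pow_pos hz_pos 22] :
    0 ≤ evalCoeffs (z : ℤ) phi6Phi30Phi42Coeffs)
  obtain ⟨a, ha⟩ := Int.eq_ofNat_of_zero_le (by linarith [pow_pos hz_pos 48] :
    0 ≤ evalCoeffs (z : ℤ) phi210Coeffs)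
  refine ⟨b, a, ?_, ?_⟩
  · zify
    rw [← hb, ← ha]
    linear_combination (-((z : ℤ) ^ 35 + 1)) * evalCoeffs_phi6Phi30Phi42_mul_phi210 z
  · zify
    exact ⟨hb ▸ hb_lo, hb ▸ hb_hi, ha ▸ ha_lo, ha ▸ ha_hi⟩

theorem Practical.two_mul_pow_105_add_one {z : ℕ} (hz : 5 ≤ z)
    (h : Practical (2 * (z ^ 35 + 1))) :
    Practical (2 * (z ^ 105 + 1)) := by
  obtain ⟨b, a, heq, hb_lo, hb_hi, ha_lo, ha_hi⟩ := exists_pow_105_add_one_eq_mul hz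
  have h22 : z ^ 22 ≤ z ^ 35 := Nat.pow_le_pow_right (by omega) (by norm_num)
  have h57 : 2 * z ^ 48 ≤ z ^ 57 := calc
    2 * z ^ 48 ≤ z ^ 9 * z ^ 48 :=
      Nat.mul_le_mul_right _ (le_trans (by omega) (Nat.le_self_pow (by norm_num) z))
    _ = z ^ 57 := by ring
  have hprod : z ^ 35 * z ^ 22 < z ^ 35 * (2 * b) :=
    Nat.mul_lt_mul_of_pos_left hb_lo (by positivity)
  convert h.mul_prod (ns := [b, a]) ⟨by omega, by omega, by omega, ?_, trivial⟩ using 1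
  · rw [heq]
    simp only [List.prod_cons, List.prod_nil]
    ring
  · nlinarith

theorem melfi_practical_pair (k : ℕ) :
    Practical (2 * (3 ^ (3 ^ k * 70) - 1)) ∧ Practical (2 * (3 ^ (3 ^ k * 70) + 1)) := by
  induction k with
  | zero =>
    simp only [pow_zero, one_mul]
    exact ⟨practical_two_mul_three_pow_70_sub_one, practical_two_mul_three_pow_70_add_one⟩
  | succ k ih =>
    obtain ⟨ih_sub, ih_add⟩ := ih
    have hx2 : 3 ^ (3 ^ k * 70) = (3 ^ (3 ^ k * 35)) ^ 2 := by rw [← pow_mul]; ring_nf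
    have hx6 : 3 ^ (3 ^ (k + 1) * 70) = (3 ^ (3 ^ k * 35)) ^ 6 := by rw [← pow_mul]; ring_nf
    have hz35 : 3 ^ (3 ^ k * 70) = (3 ^ (3 ^ k * 2)) ^ 35 := by rw [← pow_mul]; ring_nf
    have hz105 : 3 ^ (3 ^ (k + 1) * 70) = (3 ^ (3 ^ k * 2)) ^ 105 := by rw [← pow_mul]; ring_nf
    have hz : 5 ≤ 3 ^ (3 ^ k * 2) := le_trans (by norm_num)
      (Nat.pow_le_pow_right (by norm_num) (Nat.le_mul_of_pos_left 2 (by positivity)))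
    rw [hx2] at ih_sub
    rw [hz35] at ih_add
    constructor
    · rw [hx6]
      exact ih_sub.two_mul_pow_six_sub_one
    · rw [hz105]
      exact ih_add.two_mul_pow_105_add_one hz
end

section
/- For every nonnegative integer k, one has the factorization 3(3^(3^{k+1}·70) + 1) = 3(3^(3^k·70) + 1) · Φ₁₂(3^(3^k)) · Φ₆₀(3^(3^k)) · Φ₈₄(3^(3^k)) · Φ₄₂₀(3^(3^k)), and moreover, writing z = 3(3^(3^k·70) + 1), the inequalities Φ₁₂(3^(3^k)) ≤ 2z, Φ₆₀(3^(3^k)) ≤ 2z·Φ₁₂(3^(3^k)), Φ₈₄(3^(3^k)) ≤ 2z·Φ₁₂(3^(3^k))·Φ₆₀(3^(3^k)), and Φ₄₂₀(3^(3^k)) ≤ 2z·Φ₁₂(3^(3^k))·Φ₆₀(3^(3^k))·Φ₈₄(3^(3^k)) all hold. -/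
open Polynomial

set_option maxRecDepth 8000

private lemma prod_sdiff_cyclo (x : ℤ) (hx : 2 ≤ x) (n : ℕ) (hn : 0 < n) :
    ∏ d ∈ (2 * n).divisors \ n.divisors, (cyclotomic d ℤ).eval x = x ^ n + 1 := by
  have h2n : 0 < 2 * n := by omega
  have h1 : ∏ d ∈ (2 * n).divisors, (cyclotomic d ℤ).eval x = x ^ (2 * n) - 1 := by
    rw [← eval_prod, prod_cyclotomic_eq_X_pow_sub_one h2n]; simp
  have h2 : ∏ d ∈ n.divisors, (cyclotomic d ℤ).eval x = x ^ n - 1 := by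
    rw [← eval_prod, prod_cyclotomic_eq_X_pow_sub_one hn]; simp
  have hsub : n.divisors ⊆ (2 * n).divisors :=
    Nat.divisors_subset_of_dvd (by omega) ⟨2, by ring⟩
  have hne : (x ^ n - 1 : ℤ) ≠ 0 := by
    have : (2:ℤ) ≤ x ^ n := le_trans hx (le_self_pow₀ (by linarith) (by omega))
    linarith
  apply mul_right_cancel₀ hne
  rw [← h2, Finset.prod_sdiff hsub, h1, h2, two_mul, pow_add]
  ring

private lemma cyclo_facts (x : ℤ) (hx : 3 ≤ x) :
    (cyclotomic 12 ℤ).eval x = x ^ 4 - x ^ 2 + 1 ∧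
    (cyclotomic 12 ℤ).eval x * (cyclotomic 60 ℤ).eval x = x ^ 20 - x ^ 10 + 1 ∧
    (cyclotomic 12 ℤ).eval x * (cyclotomic 84 ℤ).eval x = x ^ 28 - x ^ 14 + 1 ∧
    (x ^ 70 + 1) * ((cyclotomic 12 ℤ).eval x * (cyclotomic 60 ℤ).eval x *
      (cyclotomic 84 ℤ).eval x * (cyclotomic 420 ℤ).eval x) = x ^ 210 + 1 := by
  have hx2 : (2:ℤ) ≤ x := by linarith
  set e : ℕ → ℤ := fun d => (cyclotomic d ℤ).eval x with he
  have key : ∀ n : ℕ, 0 < n →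
      ∏ d ∈ (2 * n).divisors \ n.divisors, e d = x ^ n + 1 :=
    fun n hn => prod_sdiff_cyclo x hx2 n hn
  have h2 : e 4 = x ^ 2 + 1 := by
    have := key 2 (by norm_num)
    rwa [show (2*2 : ℕ).divisors \ (2:ℕ).divisors = {4} by decide,
      Finset.prod_singleton] at this
  have h6 : e 4 * e 12 = x ^ 6 + 1 := by
    have := key 6 (by norm_num)
    rw [show (2*6 : ℕ).divisors \ (6:ℕ).divisors = {4,12} by decide] at this
    rw [← this]; simp [Finset.prod_insert, Finset.mem_insert]
  have h10 : e 4 * e 20 = x ^ 10 + 1 := by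
    have := key 10 (by norm_num)
    rw [show (2*10 : ℕ).divisors \ (10:ℕ).divisors = {4,20} by decide] at this
    rw [← this]; simp [Finset.prod_insert, Finset.mem_insert]
  have h14 : e 4 * e 28 = x ^ 14 + 1 := by
    have := key 14 (by norm_num)
    rw [show (2*14 : ℕ).divisors \ (14:ℕ).divisors = {4,28} by decide] at this
    rw [← this]; simp [Finset.prod_insert, Finset.mem_insert]
  have h30 : e 4 * e 12 * e 20 * e 60 = x ^ 30 + 1 := by
    have := key 30 (by norm_num)
    rw [show (2*30 : ℕ).divisors \ (30:ℕ).divisors = {4,12,20,60} by decide] at this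
    rw [← this]; simp [Finset.prod_insert, Finset.mem_insert]; ring
  have h42 : e 4 * e 12 * e 28 * e 84 = x ^ 42 + 1 := by
    have := key 42 (by norm_num)
    rw [show (2*42 : ℕ).divisors \ (42:ℕ).divisors = {4,12,28,84} by decide] at this
    rw [← this]; simp [Finset.prod_insert, Finset.mem_insert]; ring
  have h70 : e 4 * e 20 * e 28 * e 140 = x ^ 70 + 1 := by
    have := key 70 (by norm_num)
    rw [show (2*70 : ℕ).divisors \ (70:ℕ).divisors = {4,20,28,140} by decide] at this
    rw [← this]; simp [Finset.prod_insert, Finset.mem_insert]; ring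
  have h210 : e 4 * e 12 * e 20 * e 28 * e 60 * e 84 * e 140 * e 420 = x ^ 210 + 1 := by
    have := key 210 (by norm_num)
    rw [show (2*210 : ℕ).divisors \ (210:ℕ).divisors = {4,12,20,28,60,84,140,420}
      by decide] at this
    rw [← this]; simp [Finset.prod_insert, Finset.mem_insert]; ring
  have hx2ne : (x ^ 2 + 1 : ℤ) ≠ 0 := by positivity
  have h12 : e 12 = x ^ 4 - x ^ 2 + 1 := by
    apply mul_left_cancel₀ hx2ne
    linear_combination h6 - e 12 * h2
  have h10ne : (x ^ 10 + 1 : ℤ) ≠ 0 := by positivity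
  have h1260 : e 12 * e 60 = x ^ 20 - x ^ 10 + 1 := by
    apply mul_left_cancel₀ h10ne
    linear_combination h30 - (e 12 * e 60) * h10
  have h14ne : (x ^ 14 + 1 : ℤ) ≠ 0 := by positivity
  have h1284 : e 12 * e 84 = x ^ 28 - x ^ 14 + 1 := by
    apply mul_left_cancel₀ h14ne
    linear_combination h42 - (e 12 * e 84) * h14
  exact ⟨h12, h1260, h1284, by
    linear_combination h210 - (e 12 * e 60 * e 84 * e 420) * h70⟩

private lemma bounds_aux (x : ℤ) (hx : 3 ≤ x) :
    (3 * (x ^ 210 + 1) : ℤ) =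
      3 * (x ^ 70 + 1) * (cyclotomic 12 ℤ).eval x * (cyclotomic 60 ℤ).eval x *
        (cyclotomic 84 ℤ).eval x * (cyclotomic 420 ℤ).eval x ∧
    (cyclotomic 12 ℤ).eval x ≤ 2 * (3 * (x ^ 70 + 1) : ℤ) ∧
    (cyclotomic 60 ℤ).eval x ≤ 2 * (3 * (x ^ 70 + 1) : ℤ) * (cyclotomic 12 ℤ).eval x ∧
    (cyclotomic 84 ℤ).eval x ≤
      2 * (3 * (x ^ 70 + 1) : ℤ) * (cyclotomic 12 ℤ).eval x * (cyclotomic 60 ℤ).eval x ∧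
    (cyclotomic 420 ℤ).eval x ≤
      2 * (3 * (x ^ 70 + 1) : ℤ) * (cyclotomic 12 ℤ).eval x * (cyclotomic 60 ℤ).eval x *
        (cyclotomic 84 ℤ).eval x := by
  obtain ⟨h12, h1260, h1284, hmain⟩ := cyclo_facts x hx
  set a := (cyclotomic 12 ℤ).eval x with hadef
  set b := (cyclotomic 60 ℤ).eval x with hbdef
  set c := (cyclotomic 84 ℤ).eval x with hcdef
  set d := (cyclotomic 420 ℤ).eval x with hddef
  clear_value a b c d
  have hx1 : (1:ℤ) ≤ x := by linarith
  have hx0 : (0:ℤ) < x := by linarith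
  have hpow : ∀ m n : ℕ, m ≤ n → x ^ m ≤ x ^ n := fun m n h => pow_le_pow_right₀ hx1 h
  have hpowpos : ∀ m : ℕ, (0:ℤ) < x ^ m := fun m => pow_pos hx0 m
  have ha : a = x ^ 4 - x ^ 2 + 1 := h12
  have ha1 : (1:ℤ) ≤ a := by
    rw [ha]; nlinarith [hpow 2 4 (by norm_num), hpowpos 2]
  have hab1 : (1:ℤ) ≤ a * b := by
    rw [h1260]; nlinarith [hpow 10 20 (by norm_num), hpowpos 10]
  have hac1 : (1:ℤ) ≤ a * c := by
    rw [h1284]; nlinarith [hpow 14 28 (by norm_num), hpowpos 14]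
  have ha0 : (0:ℤ) < a := by linarith
  have hb0 : (0:ℤ) < b := by
    rcases lt_or_ge 0 b with h | h
    · exact h
    · exfalso
      have := mul_nonpos_iff.mpr (Or.inl ⟨ha0.le, h⟩)
      linarith
  have hc0 : (0:ℤ) < c := by
    rcases lt_or_ge 0 c with h | h
    · exact h
    · exfalso
      have := mul_nonpos_iff.mpr (Or.inl ⟨ha0.le, h⟩)
      linarith
  have habc0 : (0:ℤ) < a * b * c := by positivity
  have hz0 : (0:ℤ) < x ^ 70 + 1 := by positivity
  have hd0 : (0:ℤ) < d := by
    rcases lt_or_ge 0 d with h | h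
    · exact h
    · exfalso
      have h1 : a * b * c * d ≤ 0 := mul_nonpos_iff.mpr (Or.inl ⟨habc0.le, h⟩)
      have h2 : (x ^ 70 + 1) * (a * b * c * d) ≤ 0 :=
        mul_nonpos_iff.mpr (Or.inl ⟨hz0.le, h1⟩)
      rw [hmain] at h2
      linarith [hpowpos 210]
  have h1x2 : (1:ℤ) ≤ x ^ 2 := one_le_pow₀ hx1
  refine ⟨?_, ?_, ?_, ?_, ?_⟩
  · linear_combination (-3 : ℤ) * hmain
  · have h4 : x ^ 4 ≤ x ^ 70 := hpow 4 70 (by norm_num)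
    rw [ha]; linarith [hz0]
  · have hb_le : b ≤ x ^ 20 := by
      nlinarith [mul_nonneg (show (0:ℤ) ≤ a - 1 by linarith) hb0.le, h1260, hpowpos 10]
    have h20 : x ^ 20 ≤ x ^ 70 := hpow 20 70 (by norm_num)
    have : 2 * (3 * (x ^ 70 + 1)) ≤ 2 * (3 * (x ^ 70 + 1)) * a :=
      le_mul_of_one_le_right (by positivity) ha1
    linarith
  · have hc_le : c ≤ x ^ 28 := by
      nlinarith [mul_nonneg (show (0:ℤ) ≤ a - 1 by linarith) hc0.le, h1284, hpowpos 14]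
    have h28 : x ^ 28 ≤ x ^ 70 := hpow 28 70 (by norm_num)
    have hstep : 2 * (3 * (x ^ 70 + 1)) ≤ 2 * (3 * (x ^ 70 + 1)) * (a * b) :=
      le_mul_of_one_le_right (by positivity) hab1
    rw [mul_assoc]
    linarith
  · set u : ℤ := (x ^ 70 + 1) * (a * b * c) with hu
    have hu0 : (0:ℤ) < u := mul_pos hz0 habc0
    have h19 : x ^ 19 ≤ x ^ 20 - x ^ 10 + 1 := by
      have e1 : x ^ 19 * 3 ≤ x ^ 19 * x :=
        mul_le_mul_of_nonneg_left hx (hpowpos 19).le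
      have e2 : x ^ 19 * x = x ^ 20 := by ring
      linarith [hpow 10 19 (by norm_num)]
    have h27 : x ^ 27 ≤ x ^ 28 - x ^ 14 + 1 := by
      have e1 : x ^ 27 * 3 ≤ x ^ 27 * x :=
        mul_le_mul_of_nonneg_left hx (hpowpos 27).le
      have e2 : x ^ 27 * x = x ^ 28 := by ring
      linarith [hpow 14 27 (by norm_num)]
    have hau : a * u = (x ^ 70 + 1) * ((x ^ 20 - x ^ 10 + 1) * (x ^ 28 - x ^ 14 + 1)) := by
      rw [hu]; linear_combination (x ^ 70 + 1) * (a * c) * h1260 +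
        (x ^ 70 + 1) * (x ^ 20 - x ^ 10 + 1) * h1284
    have hs1 : x ^ 70 * (x ^ 19 * x ^ 27) ≤
        (x ^ 70 + 1) * ((x ^ 20 - x ^ 10 + 1) * (x ^ 28 - x ^ 14 + 1)) := by
      have i1 : x ^ 19 * x ^ 27 ≤ (x ^ 20 - x ^ 10 + 1) * (x ^ 28 - x ^ 14 + 1) :=
        mul_le_mul h19 h27 (hpowpos 27).le (by linarith [hpowpos 19])
      exact mul_le_mul (by linarith) i1 (by positivity) (by linarith)
    have h116 : x ^ 116 ≤ a * u := by
      rw [hau]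
      calc x ^ 116 = x ^ 70 * (x ^ 19 * x ^ 27) := by ring
        _ ≤ _ := hs1
    have hu112 : x ^ 112 ≤ u := by
      have hax4 : a ≤ x ^ 4 := by rw [ha]; linarith
      have h' : x ^ 4 * x ^ 112 ≤ x ^ 4 * u := by
        calc x ^ 4 * x ^ 112 = x ^ 116 := by ring
          _ ≤ a * u := h116
          _ ≤ x ^ 4 * u := mul_le_mul_of_nonneg_right hax4 hu0.le
      exact le_of_mul_le_mul_left h' (hpowpos 4)
    have hdu : d * u = x ^ 210 + 1 := by rw [hu]; linear_combination hmain
    have h2x14 : (2:ℤ) ≤ x ^ 14 := by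
      have := hpow 1 14 (by norm_num)
      simp only [pow_one] at this; linarith
    have hchain : d * u ≤ 6 * u * u := by
      have i1 : x ^ 210 + 1 ≤ 2 * x ^ 210 := by linarith [one_le_pow₀ hx1 (n := 210)]
      have i2 : 2 * x ^ 210 ≤ x ^ 14 * x ^ 210 :=
        mul_le_mul_of_nonneg_right h2x14 (hpowpos 210).le
      have i3 : x ^ 14 * x ^ 210 = x ^ 112 * x ^ 112 := by ring
      have i4 : x ^ 112 * x ^ 112 ≤ u * u :=
        mul_le_mul hu112 hu112 (hpowpos 112).le hu0.le
      nlinarith [mul_pos hu0 hu0]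
    have hfin : d ≤ 6 * u := le_of_mul_le_mul_right hchain hu0
    have heq : 2 * (3 * (x ^ 70 + 1)) * a * b * c = 6 * u := by rw [hu]; ring
    linarith

theorem factorization_and_bounds_for_z (k : ℕ) :
    (3 * (3 ^ (3 ^ (k + 1) * 70) + 1) : ℤ) =
      3 * (3 ^ (3 ^ k * 70) + 1) * (cyclotomic 12 ℤ).eval (3 ^ (3 ^ k)) *
        (cyclotomic 60 ℤ).eval (3 ^ (3 ^ k)) * (cyclotomic 84 ℤ).eval (3 ^ (3 ^ k)) *
        (cyclotomic 420 ℤ).eval (3 ^ (3 ^ k)) ∧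
    (cyclotomic 12 ℤ).eval (3 ^ (3 ^ k)) ≤ 2 * (3 * (3 ^ (3 ^ k * 70) + 1) : ℤ) ∧
    (cyclotomic 60 ℤ).eval (3 ^ (3 ^ k)) ≤
      2 * (3 * (3 ^ (3 ^ k * 70) + 1) : ℤ) * (cyclotomic 12 ℤ).eval (3 ^ (3 ^ k)) ∧
    (cyclotomic 84 ℤ).eval (3 ^ (3 ^ k)) ≤
      2 * (3 * (3 ^ (3 ^ k * 70) + 1) : ℤ) * (cyclotomic 12 ℤ).eval (3 ^ (3 ^ k)) *
        (cyclotomic 60 ℤ).eval (3 ^ (3 ^ k)) ∧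
    (cyclotomic 420 ℤ).eval (3 ^ (3 ^ k)) ≤
      2 * (3 * (3 ^ (3 ^ k * 70) + 1) : ℤ) * (cyclotomic 12 ℤ).eval (3 ^ (3 ^ k)) *
        (cyclotomic 60 ℤ).eval (3 ^ (3 ^ k)) * (cyclotomic 84 ℤ).eval (3 ^ (3 ^ k)) := by
  have hA : (3:ℤ) ^ (3 ^ (k + 1) * 70) = ((3:ℤ) ^ (3 ^ k)) ^ 210 := by
    rw [← pow_mul]
    congr 1
    rw [pow_succ]
    ring
  have hB : (3:ℤ) ^ (3 ^ k * 70) = ((3:ℤ) ^ (3 ^ k)) ^ 70 := pow_mul 3 _ 70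
  have hx : (3:ℤ) ≤ 3 ^ (3 ^ k) :=
    le_self_pow₀ (by norm_num) (pow_pos (by norm_num) k).ne'
  rw [hA, hB]
  exact bounds_aux _ hx
end
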